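/- arXiv:cs/0511030 — 8 statements merged into one kernel-verified Lean document; each statement's English description precedes it below -/
import Mathlib

section
/- If G₁,…,G_p are the connected components of a graph G, then the minimum net cost of a linear arrangement of G equals the sum over i of the minimum net cost of a linear arrangement of G_i. -/
open scoped BigOperators

/-- The length of an edge (as an unordered pair) under a labelling `α`. -/
noncomputable def edgeLen {V : Type*} (α : V → ℕ) : Sym2 V → ℕ :=
  Sym2.lift ⟨fun u v => ((α u : ℤ) - (α v : ℤ)).natAbs,
    fun u v => by simp only []; rw [show (α u:ℤ) - α v = -((α v:ℤ) - α u) by ring, Int.natAbs_neg]⟩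

/-- The net cost of a labelling `α` of the graph `G`. -/
noncomputable def netCost {V : Type*} (G : SimpleGraph V) (α : V → ℕ) : ℕ :=
  ∑ᶠ e ∈ G.edgeSet, (edgeLen α e - 1)

/-- A linear arrangement of `G`, viewed as map to `{1, …, n}`. -/
noncomputable def arr {V : Type*} [Finite V] (α : V ≃ Fin (Nat.card V)) (v : V) : ℕ :=
  (α v : ℕ) + 1

/-- `ola⁺(G)`: minimum net cost of a linear arrangement of `G`. -/
noncomputable def olaPlus {V : Type*} [Finite V] (G : SimpleGraph V) : ℕ :=
  sInf {c : ℕ | ∃ α : V ≃ Fin (Nat.card V), netCost G (arr α) = c}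

/-! Net cost depends only on the differences of labels along edges, and every edge lies in a
single component. Restricting an optimal arrangement of `G` to a component gives an injective
labelling, and replacing each label by its rank among the component's labels yields an arrangement
of the component in which no edge gets longer; hence `∑ ola⁺(Gᵢ) ≤ ola⁺(G)`. Conversely, placing
optimal arrangements of the components in disjoint blocks of labels gives an injective labelling
of `G` of cost `∑ ola⁺(Gᵢ)`, which compresses in the same way; hence `ola⁺(G) ≤ ∑ ola⁺(Gᵢ)`. -/

open Function

namespace SimpleGraph

variable {V : Type*} (G : SimpleGraph V)

lemma image_edgeSet_induce (s : Set V) :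
    Sym2.map Subtype.val '' (G.induce s).edgeSet = G.edgeSet ∩ s.sym2 := by
  rw [← (Embedding.induce s).preimage_edgeSet]
  change Sym2.map Subtype.val '' (Sym2.map Subtype.val ⁻¹' G.edgeSet) = _
  rw [Set.image_preimage_eq_inter_range, ← Set.image_univ, ← Set.sym2_univ, ← Set.sym2_image,
    Set.image_univ, Subtype.range_coe]

lemma edgeSet_eq_iUnion_image_edgeSet_induce_supp :
    G.edgeSet =
      ⋃ c : G.ConnectedComponent, Sym2.map Subtype.val '' (G.induce c.supp).edgeSet := by
  simp_rw [image_edgeSet_induce, ← Set.inter_iUnion]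
  refine (Set.inter_eq_left.2 fun e he => ?_).symm
  induction e using Sym2.ind with
  | _ u v =>
    exact Set.mem_iUnion.2 ⟨G.connectedComponentMk u, rfl,
      ConnectedComponent.connectedComponentMk_eq_of_adj he.symm⟩

lemma pairwise_disjoint_image_edgeSet_induce_supp :
    Pairwise fun c d : G.ConnectedComponent =>
      Disjoint (Sym2.map Subtype.val '' (G.induce c.supp).edgeSet)
        (Sym2.map Subtype.val '' (G.induce d.supp).edgeSet) := by
  intro c d hcd
  simp only [image_edgeSet_induce]
  refine Set.disjoint_left.2 fun e hc hd => ?_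
  induction e using Sym2.ind with
  | _ u v =>
    exact Set.disjoint_left.1 (G.pairwise_disjoint_supp_connectedComponent hcd) hc.2.1 hd.2.1

end SimpleGraph

section NetCost

variable {V W : Type*}

lemma edgeLen_mk (α : V → ℕ) (u v : V) : edgeLen α s(u, v) = ((α u : ℤ) - α v).natAbs := rfl

lemma edgeLen_map (α : W → ℕ) (g : V → W) (e : Sym2 V) :
    edgeLen α (e.map g) = edgeLen (α ∘ g) e := by
  induction e using Sym2.ind with
  | _ u v => rfl

lemma netCost_congr (G : SimpleGraph V) {f g : V → ℕ}
    (h : ∀ u v, G.Adj u v → (f u : ℤ) - f v = g u - g v) : netCost G f = netCost G g := by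
  refine finsum_mem_congr rfl fun e he => ?_
  induction e using Sym2.ind with
  | _ u v => rw [edgeLen_mk, edgeLen_mk, h u v he]

lemma netCost_mono [Finite V] (G : SimpleGraph V) {f g : V → ℕ}
    (h : ∀ u v, G.Adj u v → ((f u : ℤ) - f v).natAbs ≤ ((g u : ℤ) - g v).natAbs) :
    netCost G f ≤ netCost G g := by
  rw [netCost, netCost, finsum_mem_eq_finite_toFinset_sum _ G.edgeSet.toFinite,
    finsum_mem_eq_finite_toFinset_sum _ G.edgeSet.toFinite]
  refine Finset.sum_le_sum fun e he => Nat.sub_le_sub_right ?_ 1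
  rw [Set.Finite.mem_toFinset] at he
  induction e using Sym2.ind with
  | _ u v => exact h u v he

lemma netCost_eq_finsum_components [Finite V] (G : SimpleGraph V) (f : V → ℕ) :
    netCost G f = ∑ᶠ c : G.ConnectedComponent, netCost (G.induce c.supp) (f ∘ (↑)) := by
  rw [netCost, G.edgeSet_eq_iUnion_image_edgeSet_induce_supp,
    finsum_mem_iUnion G.pairwise_disjoint_image_edgeSet_induce_supp fun _ => Set.toFinite _]
  refine finsum_congr fun c => ?_
  rw [finsum_mem_image (Sym2.map.injective Subtype.val_injective).injOn]
  simp only [edgeLen_map]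
  rfl

end NetCost

section Rank

open Finset

variable {W : Type*} [Fintype W] {f : W → ℕ}

lemma card_filter_lt_le_of_le {u v : W} (h : f u ≤ f v) :
    #{x | f x < f u} ≤ #{x | f x < f v} :=
  card_le_card fun x hx => by
    simp only [mem_filter, mem_univ, true_and] at hx ⊢
    omega

lemma card_filter_lt_lt_of_lt {u v : W} (h : f u < f v) :
    #{x | f x < f u} < #{x | f x < f v} := by
  refine card_lt_card ⟨fun x hx => ?_, fun hsub => ?_⟩
  · simp only [mem_filter, mem_univ, true_and] at hx ⊢
    omega
  · simpa using hsub (by simpa using h : u ∈ ({x | f x < f v} : Finset W))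

lemma card_filter_lt_sub_le (hf : Injective f) {u v : W} :
    #{x | f x < f v} - #{x | f x < f u} ≤ f v - f u := by
  classical
  calc #{x | f x < f v} - #{x | f x < f u}
      ≤ #(({x | f x < f v} : Finset W) \ ({x | f x < f u} : Finset W)) := by
        have := card_le_card_sdiff_add_card (s := ({x | f x < f v} : Finset W))
          (t := {x | f x < f u})
        omega
    _ ≤ #(Ico (f u) (f v)) := by
        refine card_le_card_of_injOn f (fun x hx => ?_) hf.injOn
        simp only [coe_sdiff, coe_filter, mem_univ, true_and, Set.mem_sdiff,
          Set.mem_ofPred_eq] at hx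
        simpa using hx.symm
    _ = f v - f u := Nat.card_Ico _ _

lemma exists_equiv_fin_natAbs_sub_le (hf : Injective f) :
    ∃ β : W ≃ Fin (Nat.card W), ∀ u v,
      ((β u : ℤ) - β v).natAbs ≤ ((f u : ℤ) - f v).natAbs := by
  let r : W → Fin (Nat.card W) := fun u =>
    ⟨#{x | f x < f u}, by
      rw [Nat.card_eq_fintype_card, ← card_univ]
      exact card_lt_card (filter_ssubset.2 ⟨u, mem_univ u, lt_irrefl _⟩)⟩
  have hr : Injective r := fun u v huv => hf <| by
    rcases lt_trichotomy (f u) (f v) with h | h | h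
    · exact absurd (congrArg Fin.val huv) (card_filter_lt_lt_of_lt h).ne
    · exact h
    · exact absurd (congrArg Fin.val huv) (card_filter_lt_lt_of_lt h).ne'
  refine ⟨Equiv.ofBijective r ((Fintype.bijective_iff_injective_and_card r).2
    ⟨hr, by simp [Nat.card_eq_fintype_card]⟩), fun u v => ?_⟩
  have key : ∀ u v, f u ≤ f v → (r u : ℕ) ≤ r v ∧ (r v : ℕ) - r u ≤ f v - f u :=
    fun _ _ h => ⟨card_filter_lt_le_of_le h, card_filter_lt_sub_le hf⟩
  simp only [Equiv.ofBijective_apply]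
  rcases le_total (f u) (f v) with h | h
  · have := key u v h; omega
  · have := key v u h; omega

end Rank

section Arrangement

variable {V W : Type*} [Finite V] [Finite W]

lemma arr_injective (α : V ≃ Fin (Nat.card V)) : Injective (arr α) :=
  fun _ _ h => α.injective (Fin.ext (Nat.succ_injective h))

lemma arr_le_card (α : V ≃ Fin (Nat.card V)) (v : V) : arr α v ≤ Nat.card V := (α v).isLt

lemma exists_netCost_arr_eq_olaPlus (G : SimpleGraph V) :
    ∃ α : V ≃ Fin (Nat.card V), netCost G (arr α) = olaPlus G :=
  Nat.sInf_mem (s := {c | ∃ α : V ≃ Fin (Nat.card V), netCost G (arr α) = c})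
    ⟨_, Finite.equivFin V, rfl⟩

lemma olaPlus_le_netCost_of_injective (G : SimpleGraph W) {f : W → ℕ} (hf : Injective f) :
    olaPlus G ≤ netCost G f := by
  cases nonempty_fintype W
  obtain ⟨β, hβ⟩ := exists_equiv_fin_natAbs_sub_le hf
  calc olaPlus G ≤ netCost G (arr β) := Nat.sInf_le ⟨β, rfl⟩
    _ ≤ netCost G f := netCost_mono G fun u v _ => by
        simpa only [arr, Nat.cast_add, add_sub_add_right_eq_sub] using hβ u v

end Arrangement

lemma exists_injective_add_const_on_fibers {V ι : Type*} [Finite ι] (p : V → ι) (N : ℕ)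
    (g : ∀ i, {v // p v = i} → ℕ) (hg : ∀ i, Injective (g i)) (hN : ∀ i u, g i u < N) :
    ∃ f : V → ℕ, Injective f ∧ ∀ i, ∃ k, ∀ u : {v // p v = i}, f u = k + g i u := by
  obtain ⟨n, ⟨e⟩⟩ := Finite.exists_equiv_fin ι
  let f : V → ℕ := fun v => N * e (p v) + g (p v) ⟨v, rfl⟩
  have hf : ∀ i (u : {v // p v = i}), f u = N * e i + g i u := by
    rintro _ ⟨u, rfl⟩
    rfl
  refine ⟨f, fun u v huv => ?_, fun i => ⟨_, hf i⟩⟩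
  have hpos : 0 < N := (Nat.zero_le _).trans_lt (hN _ ⟨u, rfl⟩)
  have hp : p u = p v := e.injective <| Fin.ext <| by
    simpa [f, Nat.mul_add_div hpos, Nat.div_eq_of_lt (hN _ _)] using congrArg (· / N) huv
  have hu : f u = _ := hf (p v) ⟨u, hp⟩
  have hv : f v = _ := hf (p v) ⟨v, rfl⟩
  exact congrArg Subtype.val (hg (p v) (by omega : g (p v) ⟨u, hp⟩ = g (p v) ⟨v, rfl⟩))

/-- ola⁺ of a graph equals the sum of ola⁺ over its connected components. -/
theorem olaPlus_eq_sum_components {V : Type*} [Finite V] (G : SimpleGraph V) :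
    olaPlus G = ∑ᶠ c : G.ConnectedComponent, olaPlus (G.induce c.supp) := by
  refine le_antisymm ?_ ?_
  · choose β hβ using fun c : G.ConnectedComponent =>
      exists_netCost_arr_eq_olaPlus (G.induce c.supp)
    obtain ⟨f, hf, hfβ⟩ := exists_injective_add_const_on_fibers G.connectedComponentMk
      (Nat.card V + 1) (fun c (u : c.supp) => arr (β c) u) (fun c => arr_injective (β c))
      fun c u => Nat.lt_succ_of_le ((arr_le_card _ u).trans (Finite.card_subtype_le _))
    calc olaPlus G ≤ netCost G f := olaPlus_le_netCost_of_injective G hf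
      _ = ∑ᶠ c : G.ConnectedComponent, netCost (G.induce c.supp) (f ∘ (↑)) :=
        netCost_eq_finsum_components G f
      _ = ∑ᶠ c : G.ConnectedComponent, olaPlus (G.induce c.supp) := finsum_congr fun c => by
        obtain ⟨k, hk⟩ := hfβ c
        rw [← hβ c]
        exact netCost_congr _ fun u v _ => by
          simp only [comp_apply, (hk u : f u = _), (hk v : f v = _), Nat.cast_add,
            add_sub_add_left_eq_sub]
  · obtain ⟨α, hα⟩ := exists_netCost_arr_eq_olaPlus G
    rw [← hα, netCost_eq_finsum_components]
    exact finsum_le_finsum' (Set.toFinite _) (Set.toFinite _) fun c =>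
      olaPlus_le_netCost_of_injective _ ((arr_injective α).comp Subtype.val_injective)
end

section
/- Let G be a graph, X ⊆ V(G), and let u,v be two distinct vertices belonging to the same connected component of G−X. If α is a linear arrangement of G with α(u) < α(x) < α(v) for every x ∈ X, then nc(α, G−X) ≥ |X|. -/
open scoped BigOperators

lemma exists_cross_edge {W : Type*} {H : SimpleGraph W} (f : W → ℕ) {a b : W}
    (p : H.Walk a b) (t : ℕ) :
    f a < t → t < f b → (∀ w ∈ p.support, f w ≠ t) →
    ∃ e ∈ p.edges, ∃ x y : W, e = s(x, y) ∧ f x < t ∧ t < f y := by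
  induction p with
  | nil => intro ha hb _; exact absurd (ha.trans hb) (lt_irrefl _)
  | @cons a c b hadj q ih =>
    intro ha hb hsupp
    rcases lt_or_gt_of_ne (hsupp c (by simp)) with hc | hc
    · obtain ⟨e, he, x, y, hxy⟩ := ih hc hb (fun w hw => hsupp w (by simp [hw]))
      exact ⟨e, by simp [he], x, y, hxy⟩
    · exact ⟨s(a, c), by simp, a, c, rfl, ha, hc⟩

theorem netCost_induce_compl_ge {V : Type*} [Finite V] (G : SimpleGraph V) (X : Set V)
    (u v : V) (hu : u ∈ Xᶜ) (hv : v ∈ Xᶜ) (huv : u ≠ v)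
    (hreach : (G.induce Xᶜ).Reachable ⟨u, hu⟩ ⟨v, hv⟩)
    (α : V ≃ Fin (Nat.card V))
    (hbetween : ∀ x ∈ X, α u < α x ∧ α x < α v) :
    Nat.card X ≤ netCost (G.induce Xᶜ) (fun w => arr α w.1) := by
  classical
  have : Fintype V := Fintype.ofFinite V
  set G' := G.induce Xᶜ with hG'
  set f : (Xᶜ : Set V) → ℕ := fun w => arr α w.1 with hf
  have hinjα : Function.Injective (arr α) := by
    intro a b hab
    have : (α a : ℕ) = α b := by simpa [arr] using hab
    exact α.injective (Fin.ext this)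
  obtain ⟨W⟩ := hreach
  haveI : Inhabited (Sym2 (Xᶜ : Set V)) := ⟨s(⟨u, hu⟩, ⟨u, hu⟩)⟩
  have key : ∀ x ∈ X.toFinset, ∃ e, e ∈ W.edges.toFinset ∧
      ∃ p q : (Xᶜ : Set V), e = s(p, q) ∧ f p < arr α x ∧ arr α x < f q := by
    intro x hx
    rw [Set.mem_toFinset] at hx
    have h1 : f ⟨u, hu⟩ < arr α x := by
      have := (hbetween x hx).1
      simpa [f, arr] using (Fin.lt_iff_val_lt_val.mp this)
    have h2 : arr α x < f ⟨v, hv⟩ := by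
      have := (hbetween x hx).2
      simpa [f, arr] using (Fin.lt_iff_val_lt_val.mp this)
    have hsupp : ∀ w ∈ W.support, f w ≠ arr α x := by
      intro w hw hEq
      have : (w : V) = x := hinjα hEq
      exact w.2 (this ▸ hx)
    obtain ⟨e, he, p, q, hpq⟩ := exists_cross_edge f W (arr α x) h1 h2 hsupp
    exact ⟨e, List.mem_toFinset.mpr he, p, q, hpq⟩
  choose! c hcS hcross using key
  have hcard : Nat.card X = X.toFinset.card := by
    rw [Nat.card_coe_set_eq, Set.ncard_eq_toFinset_card']
  have h1 : X.toFinset.card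
      = ∑ e ∈ W.edges.toFinset, (X.toFinset.filter (fun x => c x = e)).card :=
    Finset.card_eq_sum_card_fiberwise hcS
  have h2 : ∀ e ∈ W.edges.toFinset,
      (X.toFinset.filter (fun x => c x = e)).card ≤ edgeLen f e - 1 := by
    intro e he
    set T := X.toFinset.filter (fun x => c x = e) with hT
    rcases T.eq_empty_or_nonempty with hTe | ⟨x0, hx0⟩
    · simp [hTe]
    · obtain ⟨hx0X, hx0e⟩ := Finset.mem_filter.mp hx0
      obtain ⟨p, q, hpq, hp, hq⟩ := hcross x0 hx0X
      rw [hx0e] at hpq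
      have hpltq : f p < f q := hp.trans hq
      have hall : ∀ x ∈ T, arr α x ∈ Finset.Ioo (f p) (f q) := by
        intro x hx
        obtain ⟨hxX, hxe⟩ := Finset.mem_filter.mp hx
        obtain ⟨p', q', hpq2, hp2, hq2⟩ := hcross x hxX
        rw [hxe, hpq] at hpq2
        rcases Sym2.eq_iff.mp hpq2 with ⟨h1, h2⟩ | ⟨h1, h2⟩
        · rw [← h1] at hp2; rw [← h2] at hq2
          exact Finset.mem_Ioo.mpr ⟨hp2, hq2⟩
        · rw [← h2] at hp2; rw [← h1] at hq2
          exact absurd (hp2.trans hq2) (not_lt.mpr hpltq.le)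
      have hinjT : Set.InjOn (fun x => arr α x) T := fun a _ b _ h => hinjα h
      have hle : T.card ≤ (Finset.Ioo (f p) (f q)).card :=
        Finset.card_le_card_of_injOn _ hall hinjT
      have hlen : edgeLen f e = f q - f p := by
        rw [hpq]
        show ((f p : ℤ) - f q).natAbs = f q - f p
        omega
      rw [hlen]
      simpa [Nat.card_Ioo] using hle
  have hsub : W.edges.toFinset ⊆ G'.edgeFinset := by
    intro e he
    exact SimpleGraph.mem_edgeFinset.mpr (W.edges_subset_edgeSet (List.mem_toFinset.mp he))
  have h3 : ∑ e ∈ W.edges.toFinset, (edgeLen f e - 1)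
      ≤ ∑ e ∈ G'.edgeFinset, (edgeLen f e - 1) :=
    Finset.sum_le_sum_of_subset hsub
  have h4 : netCost G' f = ∑ e ∈ G'.edgeFinset, (edgeLen f e - 1) := by
    rw [netCost, ← SimpleGraph.coe_edgeFinset, finsum_mem_coe_finset]
  calc Nat.card X = X.toFinset.card := hcard
    _ = ∑ e ∈ W.edges.toFinset, (X.toFinset.filter (fun x => c x = e)).card := h1
    _ ≤ ∑ e ∈ W.edges.toFinset, (edgeLen f e - 1) := Finset.sum_le_sum h2
    _ ≤ ∑ e ∈ G'.edgeFinset, (edgeLen f e - 1) := h3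
    _ = netCost G' f := h4.symm
end

section
/- If G is a connected bridgeless graph of order n ≥ 1, then ola⁺(G) ≥ (n−1)/2. -/
open scoped BigOperators

/-- a connected bridgeless graph of order `n ≥ 1` has `ola⁺(G) ≥ (n−1)/2`. -/
theorem olaPlus_ge_of_bridgeless {V : Type*} [Finite V] (G : SimpleGraph V)
    (hconn : G.Connected) (hn : 1 ≤ Nat.card V)
    (hbridgeless : ∀ u v : V, ¬ G.IsBridge s(u, v)) :
    Nat.card V - 1 ≤ 2 * olaPlus G := by
  classical
  haveI : Fintype V := Fintype.ofFinite V
  set n := Nat.card V with hndef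
  have key : ∀ β : V ≃ Fin n, n - 1 ≤ 2 * netCost G (arr β) := by
    intro β
    -- witness existence per cut
    have hwit : ∀ i ∈ Finset.range (n-1), ∃ u v : V, G.Adj u v ∧
        (β u : ℕ) ≤ i ∧ i < (β v : ℕ) ∧ (β u : ℕ) + 2 ≤ (β v : ℕ) := by
      intro i hi
      rw [Finset.mem_range] at hi
      have hin : i < n := lt_of_lt_of_le hi (Nat.sub_le _ _)
      -- crossing edge exists
      set A : Set V := {v | (β v : ℕ) ≤ i} with hA
      have hu1 : β.symm ⟨0, hn⟩ ∈ A := by simp [hA]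
      have hb1 : β.symm ⟨n-1, Nat.sub_lt hn one_pos⟩ ∉ A := by
        simp only [hA, Set.mem_setOf_eq, Equiv.apply_symm_apply, not_le]
        exact hi
      obtain ⟨p⟩ := hconn (β.symm ⟨0, hn⟩) (β.symm ⟨n-1, Nat.sub_lt hn one_pos⟩)
      obtain ⟨d, _, hdf, hds⟩ := p.exists_boundary_dart A hu1 hb1
      have hdf2 : (β d.fst : ℕ) ≤ i := hdf
      have hds2 : i < (β d.snd : ℕ) := by simpa [hA] using hds
      by_contra hcon
      push_neg at hcon
      -- every crossing edge has the fixed endpoints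
      have huniq : ∀ u v : V, G.Adj u v → (β u : ℕ) ≤ i → i < (β v : ℕ) →
          u = d.fst ∧ v = d.snd := by
        intro u v hadj hu hv
        have h1 := hcon u v hadj hu hv
        have h2 := hcon d.fst d.snd d.adj hdf2 hds2
        have hu' : (β u : ℕ) = i := by omega
        have hv' : (β v : ℕ) = i + 1 := by omega
        have hf' : (β d.fst : ℕ) = i := by omega
        have hs' : (β d.snd : ℕ) = i + 1 := by omega
        constructor
        · exact β.injective (Fin.ext (by omega))
        · exact β.injective (Fin.ext (by omega))
      -- the crossing edge is a bridge
      apply hbridgeless d.fst d.snd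
      rw [SimpleGraph.isBridge_iff]
      rintro ⟨q⟩
      obtain ⟨d', _, hdf', hds'⟩ := q.exists_boundary_dart A hdf hds
      have hdf2' : (β d'.fst : ℕ) ≤ i := hdf'
      have hds2' : i < (β d'.snd : ℕ) := by simpa [hA] using hds'
      have hadj' := d'.adj
      rw [SimpleGraph.deleteEdges_adj] at hadj'
      obtain ⟨hGadj, hne⟩ := hadj'
      obtain ⟨he1, he2⟩ := huniq d'.fst d'.snd hGadj hdf2' hds2'
      exact hne (by rw [he1, he2, Set.mem_singleton_iff])
    -- choose witnesses
    choose u v hadj hu hv hlen using hwit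
    set W : ∀ i ∈ Finset.range (n-1), Sym2 V := fun i hi => s(u i hi, v i hi) with hW
    have hWmem : ∀ i (hi : i ∈ Finset.range (n-1)), W i hi ∈ G.edgeFinset := by
      intro i hi
      rw [SimpleGraph.mem_edgeFinset, SimpleGraph.mem_edgeSet]
      exact hadj i hi
    -- count fibers
    classical
    have hcard : (Finset.range (n-1)).card =
        ∑ e ∈ G.edgeFinset, ((Finset.range (n-1)).attach.filter
          (fun i => W i.1 i.2 = e)).card := by
      rw [← Finset.card_attach]
      exact Finset.card_eq_sum_card_fiberwise (fun i _ => hWmem i.1 i.2)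
    have hbound : ∀ e ∈ G.edgeFinset,
        ((Finset.range (n-1)).attach.filter (fun i => W i.1 i.2 = e)).card
          ≤ 2 * (edgeLen (arr β) e - 1) := by
      intro e he
      induction e using Sym2.ind with
      | _ a b =>
        by_cases hemp : ((Finset.range (n-1)).attach.filter
            (fun i => W i.1 i.2 = s(a,b))).Nonempty
        · obtain ⟨⟨i0, hi0⟩, hmem0⟩ := hemp
          rw [Finset.mem_filter] at hmem0
          have hw0 := hmem0.2
          -- edgeLen of this edge is ≥ 2
          have hlen0 : 2 ≤ edgeLen (arr β) s(a,b) := by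
            rw [← hw0]
            have h1 := hlen i0 hi0
            simp only [hW, edgeLen, Sym2.lift_mk, arr]
            omega
          -- fiber ⊆ crossing cuts ⊆ interval
          have hsub : ((Finset.range (n-1)).attach.filter
              (fun i => W i.1 i.2 = s(a,b))).card ≤ edgeLen (arr β) s(a,b) := by
            have : ∀ x ∈ ((Finset.range (n-1)).attach.filter
                (fun i => W i.1 i.2 = s(a,b))),
                x.1 ∈ Finset.Ico (min (β a : ℕ) (β b : ℕ)) (max (β a : ℕ) (β b : ℕ)) := by
              rintro ⟨j, hj⟩ hmem
              rw [Finset.mem_filter] at hmem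
              have hw : s(u j hj, v j hj) = s(a, b) := hmem.2
              have hju := hu j hj
              have hjv := hv j hj
              have hjl := hlen j hj
              rw [Sym2.eq_iff] at hw
              rcases hw with ⟨h1, h2⟩ | ⟨h1, h2⟩ <;>
                subst h1 <;> subst h2 <;>
                simp only [Finset.mem_Ico] <;> omega
            calc ((Finset.range (n-1)).attach.filter
                (fun i => W i.1 i.2 = s(a,b))).card
                ≤ (Finset.Ico (min (β a : ℕ) (β b : ℕ)) (max (β a : ℕ) (β b : ℕ))).card := by
                  apply Finset.card_le_card_of_injOn (fun x => x.1) (fun x hx => this x hx)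
                  rintro ⟨x, hx⟩ _ ⟨y, hy⟩ _ hxy
                  exact Subtype.ext hxy
              _ = edgeLen (arr β) s(a,b) := by
                  rw [Nat.card_Ico]
                  simp only [edgeLen, Sym2.lift_mk, arr]
                  omega
          omega
        · rw [Finset.not_nonempty_iff_eq_empty] at hemp
          rw [hemp]
          simp
    -- netCost via finsum
    have hnet : netCost G (arr β) = ∑ e ∈ G.edgeFinset, (edgeLen (arr β) e - 1) := by
      rw [netCost, ← SimpleGraph.coe_edgeFinset, finsum_mem_coe_finset]
    calc n - 1 = (Finset.range (n-1)).card := by rw [Finset.card_range]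
      _ = ∑ e ∈ G.edgeFinset, ((Finset.range (n-1)).attach.filter
            (fun i => W i.1 i.2 = e)).card := hcard
      _ ≤ ∑ e ∈ G.edgeFinset, 2 * (edgeLen (arr β) e - 1) :=
            Finset.sum_le_sum hbound
      _ = 2 * netCost G (arr β) := by rw [hnet, Finset.mul_sum]
  -- olaPlus is attained
  have hne : {c : ℕ | ∃ α : V ≃ Fin n, netCost G (arr α) = c}.Nonempty :=
    ⟨netCost G (arr (Finite.equivFin V)), Finite.equivFin V, rfl⟩
  obtain ⟨β, hβ⟩ := Nat.sInf_mem hne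
  have hola : olaPlus G = netCost G (arr β) := hβ.symm
  rw [hola]
  exact key β
end

section
/- Let G be a connected graph, X ⊆ V(G) such that the induced subgraph G[X] is connected, and let the connected components of G−X have orders n₁ ≤ n₂ ≤ … ≤ n_r. Then ola⁺(G) ≥ ola⁺(G[X]) + Σ_{i=1}^{r−2} n_i. -/
open scoped BigOperators

section Aux
variable {V : Type*}

open Classical in
/-- vertices strictly covered by the edge `e` in the arrangement `α` -/
noncomputable def coverE [Fintype V] {n : ℕ} (α : V ≃ Fin n) : Sym2 V → Finset V :=
  Sym2.lift ⟨fun u v => Finset.univ.filter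
      (fun w => ((α u : ℕ) < α w ∧ (α w : ℕ) < α v) ∨ ((α v : ℕ) < α w ∧ (α w : ℕ) < α u)),
    fun u v => by ext w; simp [or_comm]⟩

open Classical in
lemma mem_coverE [Fintype V] {n : ℕ} (α : V ≃ Fin n) {u v w : V} :
    w ∈ coverE α s(u, v) ↔
      ((α u : ℕ) < α w ∧ (α w : ℕ) < α v) ∨ ((α v : ℕ) < α w ∧ (α w : ℕ) < α u) := by
  simp [coverE]

lemma coverE_card' [Fintype V] {n : ℕ} (α : V ≃ Fin n) {u v : V} (huv : (α u : ℕ) < α v) :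
    (coverE α s(u, v)).card = (α v : ℕ) - α u - 1 := by
  classical
  rw [← Fin.card_Ioo (α u) (α v)]
  apply Finset.card_bij (fun w _ => α w)
  · intro w hw
    rw [mem_coverE] at hw
    rcases hw with ⟨h1, h2⟩ | ⟨h1, h2⟩
    · exact Finset.mem_Ioo.mpr ⟨h1, h2⟩
    · omega
  · intro a _ b _ hab; exact α.injective hab
  · intro k hk
    refine ⟨α.symm k, ?_, by simp⟩
    rw [mem_coverE]
    simp only [Finset.mem_Ioo, Fin.lt_def] at hk
    simp only [Equiv.apply_symm_apply]
    omega

lemma coverE_card [Fintype V] {n : ℕ} (α : V ≃ Fin n) {u v : V} (h : u ≠ v) :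
    (coverE α s(u, v)).card = ((α u : ℤ) + 1 - ((α v : ℤ) + 1)).natAbs - 1 := by
  have hne : (α u : ℕ) ≠ (α v : ℕ) := by
    intro hc; exact h (α.injective (Fin.ext hc))
  rcases lt_or_gt_of_ne hne with hlt | hgt
  · rw [coverE_card' α hlt]; omega
  · rw [Sym2.eq_swap, coverE_card' α hgt]; omega

lemma edgeLen_arr [Finite V] (α : V ≃ Fin (Nat.card V)) (u v : V) :
    edgeLen (arr α) s(u, v) = ((α u : ℤ) + 1 - ((α v : ℤ) + 1)).natAbs := by
  simp [edgeLen, arr]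

lemma sm_le {k r : ℕ} {f : Fin k → Fin r} (hf : StrictMono f) (j : Fin k) : (j : ℕ) ≤ (f j : ℕ) := by
  have H : ∀ m (j : Fin k), j.val = m → m ≤ (f j : ℕ) := by
    intro m
    induction m with
    | zero => intro j _; exact Nat.zero_le _
    | succ m ih =>
      intro j hj
      have hm : m < k := by omega
      have h1 : m ≤ (f ⟨m, hm⟩ : ℕ) := ih ⟨m, hm⟩ rfl
      have h2 : (f ⟨m, hm⟩ : ℕ) < (f j : ℕ) := Fin.lt_def.mp (hf (by simp [Fin.lt_def, hj]))
      omega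
  exact H j.val j rfl

lemma sum_small_le {r : ℕ} (n : Fin r → ℕ) (hmono : ∀ i j : Fin r, i ≤ j → n i ≤ n j)
    (T : Finset (Fin r)) (hcard : r ≤ T.card + 2) :
    (∑ i : Fin r, if (i : ℕ) < r - 2 then n i else 0) ≤ ∑ i ∈ T, n i := by
  classical
  rw [← Finset.sum_filter]
  set F : Finset (Fin r) := Finset.univ.filter (fun i => (i : ℕ) < r - 2) with hF
  have hFc : F.card ≤ r - 2 := by
    have h1 : F.card = (F.image (fun i : Fin r => (i : ℕ))).card :=
      (Finset.card_image_of_injective _ Fin.val_injective).symm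
    have h2 : F.image (fun i : Fin r => (i : ℕ)) ⊆ Finset.range (r - 2) := by
      intro m hm
      obtain ⟨i, hi, rfl⟩ := Finset.mem_image.mp hm
      rw [hF] at hi
      simpa using (Finset.mem_filter.mp hi).2
    calc F.card = _ := h1
      _ ≤ (Finset.range (r - 2)).card := Finset.card_le_card h2
      _ = r - 2 := Finset.card_range _
  have hFT : F.card ≤ T.card := by omega
  set emb := T.orderEmbOfCardLe hFT with hemb
  have hmemF : ∀ i ∈ F, (i : ℕ) < F.card := by
    intro i hi
    have hsub : Finset.Iic i ⊆ F := by
      intro j hj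
      simp only [Finset.mem_Iic] at hj
      rw [hF] at hi ⊢
      rw [Finset.mem_filter] at hi ⊢
      exact ⟨Finset.mem_univ _, lt_of_le_of_lt (Fin.le_def.mp hj) hi.2⟩
    have := Finset.card_le_card hsub
    have hIic : (Finset.Iic i).card = (i : ℕ) + 1 := Fin.card_Iic i
    omega
  set φ : Fin r → Fin r := fun i => if h : (i : ℕ) < F.card then emb ⟨(i : ℕ), h⟩ else i with hφ
  have hle : ∀ i ∈ F, (i : ℕ) ≤ (φ i : ℕ) := by
    intro i hi
    simp only [hφ, hmemF i hi, dif_pos]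
    exact sm_le emb.strictMono ⟨(i : ℕ), hmemF i hi⟩
  calc ∑ i ∈ F, n i ≤ ∑ i ∈ F, n (φ i) :=
        Finset.sum_le_sum (fun i hi => hmono i (φ i) (Fin.le_def.mpr (hle i hi)))
    _ = ∑ j ∈ F.image φ, n j := by
        rw [Finset.sum_image]
        intro a ha b hb hab
        have ha' := hmemF a ha; have hb' := hmemF b hb
        simp only [hφ, dif_pos ha', dif_pos hb'] at hab
        have := emb.injective hab
        exact Fin.ext (by simpa using congrArg Fin.val this)
    _ ≤ ∑ j ∈ T, n j := by
        apply Finset.sum_le_sum_of_subset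
        intro j hj
        obtain ⟨i, hi, rfl⟩ := Finset.mem_image.mp hj
        simp only [hφ, dif_pos (hmemF i hi)]
        exact T.orderEmbOfCardLe_mem hFT _

lemma reach_induce {G : SimpleGraph V} (s : Set V) :
    ∀ {u v : V} (p : G.Walk u v) (hp : ∀ y ∈ p.support, y ∈ s),
      (G.induce s).Reachable ⟨u, hp u p.start_mem_support⟩ ⟨v, hp v p.end_mem_support⟩ := by
  intro u v p
  induction p with
  | nil => intro hp; exact SimpleGraph.Reachable.refl _
  | @cons u b v h p ih =>
    intro hp
    have hb : b ∈ s := hp b (by simp [SimpleGraph.Walk.support_cons])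
    have hu : u ∈ s := hp u (by simp [SimpleGraph.Walk.support_cons])
    have hadj : (G.induce s).Adj ⟨u, hu⟩ ⟨b, hb⟩ := by
      simp only [SimpleGraph.comap_adj, Function.Embedding.coe_subtype]
      exact h
    have hrest := ih (fun y hy => hp y (by simp [SimpleGraph.Walk.support_cons, hy]))
    exact hadj.reachable.trans hrest

lemma climb {G : SimpleGraph V} (a : V → ℕ) (t : ℕ) (w' : V)
    (hno : ∀ u v : V, G.Adj u v → ¬(a u < t ∧ t < a v))
    (hinj : ∀ y : V, a y = t → y = w') :
    ∀ {u v : V} (p : G.Walk u v), a u < t → t < a v →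
      ∃ q : G.Walk u w', ∀ y ∈ q.support, a y ≤ t := by
  intro u v p
  induction p with
  | nil => intro h1 h2; omega
  | @cons u b v h p ih =>
    intro h1 h2
    rcases lt_trichotomy (a b) t with hb | hb | hb
    · obtain ⟨q, hq⟩ := ih hb h2
      refine ⟨q.cons h, ?_⟩
      intro y hy
      rw [SimpleGraph.Walk.support_cons, List.mem_cons] at hy
      rcases hy with rfl | hy
      · omega
      · exact hq y hy
    · obtain rfl := hinj b hb
      refine ⟨SimpleGraph.Walk.cons h SimpleGraph.Walk.nil, ?_⟩
      intro y hy
      simp only [SimpleGraph.Walk.support_cons, SimpleGraph.Walk.support_nil,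
        List.mem_cons, List.not_mem_nil, or_false, List.mem_singleton] at hy
      rcases hy with rfl | rfl <;> omega
    · exact absurd ⟨h1, hb⟩ (hno u b h)

lemma exists_orderEquiv [Fintype V] (X : Set V) [DecidablePred (· ∈ X)] {n : ℕ} (α : V ≃ Fin n) :
    ∃ β : X ≃ Fin (Nat.card X), ∀ x y : X, ((β x : ℕ) < β y ↔ (α x.1 : ℕ) < α y.1) := by
  classical
  have hfinj : Function.Injective (fun x : X => α x.1) := by
    intro a b h
    exact Subtype.ext (α.injective h)
  set T : Finset (Fin n) := Finset.univ.image (fun x : X => α x.1) with hTdef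
  have hT : T.card = Nat.card X := by
    rw [hTdef, Finset.card_image_of_injective _ hfinj, Finset.card_univ,
      Nat.card_eq_fintype_card]
  have hgsurj : Function.Surjective
      (fun x : X => (⟨α x.1, Finset.mem_image_of_mem _ (Finset.mem_univ x)⟩ : {k // k ∈ T})) := by
    rintro ⟨k, hk⟩
    rw [hTdef, Finset.mem_image] at hk
    obtain ⟨x, _, hx⟩ := hk
    exact ⟨x, Subtype.ext hx⟩
  set g : X ≃ {k // k ∈ T} := Equiv.ofBijective _
    ⟨fun a b h => hfinj (congrArg Subtype.val h), hgsurj⟩ with hgdef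
  refine ⟨g.trans (T.orderIsoOfFin hT).symm.toEquiv, fun x y => ?_⟩
  rw [← Fin.lt_def]
  show (T.orderIsoOfFin hT).symm (g x) < (T.orderIsoOfFin hT).symm (g y) ↔ _
  rw [OrderIso.lt_iff_lt]
  show (g x : Fin n) < (g y : Fin n) ↔ _
  rw [Fin.lt_def]
  rfl

lemma netCost_eq_sum [Finite V] (G : SimpleGraph V) (a : V → ℕ) :
    netCost G a = ∑ e ∈ G.edgeSet.toFinite.toFinset, (edgeLen a e - 1) :=
  finsum_mem_eq_finite_toFinset_sum _ _

lemma card_filter_cover [Fintype V] {n : ℕ} (α : V ≃ Fin n) (X : Set V)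
    [DecidablePred (· ∈ X)] {m : ℕ} (β : X ≃ Fin m)
    (hβ : ∀ x y : X, ((β x : ℕ) < β y ↔ (α x.1 : ℕ) < α y.1)) (x y : X) :
    (coverE β s(x, y)).card = ((coverE α s(x.1, y.1)).filter (· ∈ X)).card := by
  classical
  refine Finset.card_bij (fun (z : X) (_ : z ∈ coverE β s(x, y)) => (z : V)) ?_ ?_ ?_
  · intro z hz
    rw [mem_coverE] at hz
    rw [Finset.mem_filter, mem_coverE]
    refine ⟨?_, z.2⟩
    rcases hz with ⟨h1, h2⟩ | ⟨h1, h2⟩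
    · exact Or.inl ⟨(hβ x z).mp h1, (hβ z y).mp h2⟩
    · exact Or.inr ⟨(hβ y z).mp h1, (hβ z x).mp h2⟩
  · intro a _ b _ hab; exact Subtype.ext hab
  · intro w hw
    rw [Finset.mem_filter, mem_coverE] at hw
    refine ⟨⟨w, hw.2⟩, ?_, rfl⟩
    rw [mem_coverE]
    rcases hw.1 with ⟨h1, h2⟩ | ⟨h1, h2⟩
    · exact Or.inl ⟨(hβ x ⟨w, hw.2⟩).mpr h1, (hβ ⟨w, hw.2⟩ y).mpr h2⟩
    · exact Or.inr ⟨(hβ y ⟨w, hw.2⟩).mpr h1, (hβ ⟨w, hw.2⟩ x).mpr h2⟩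

lemma same_comp_aux {G : SimpleGraph V} (hconn : G.Connected) (X : Set V)
    (a : V → ℕ) (hainj : ∀ y z : V, a y = a z → y = z)
    (x₀ : V) (hx₀ : x₀ ∈ X)
    {w w' : V} (hw : w ∈ Xᶜ) (hw' : w' ∈ Xᶜ)
    (hcov' : ∀ u v : V, G.Adj u v → ¬(a u < a w' ∧ a w' < a v))
    (hXright : ∀ x ∈ X, a w' < a x)
    (hww' : a w < a w') :
    (G.induce Xᶜ).connectedComponentMk ⟨w, hw⟩ =
      (G.induce Xᶜ).connectedComponentMk ⟨w', hw'⟩ := by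
  obtain ⟨p⟩ := hconn.preconnected w x₀
  obtain ⟨q, hq⟩ := climb a (a w') w' hcov' (fun y hy => hainj y w' hy) p hww' (hXright x₀ hx₀)
  have hsup : ∀ y ∈ q.support, y ∈ Xᶜ := by
    intro y hy hyX
    exact absurd (hq y hy) (not_le.mpr (hXright y hyX))
  exact SimpleGraph.ConnectedComponent.sound (reach_induce Xᶜ q hsup)

end Aux

theorem olaPlus_ge_induced_add_small_components {V : Type*} [Finite V] (G : SimpleGraph V)
    (hconn : G.Connected) (X : Set V) (hX : (G.induce X).Connected)
    (r : ℕ) (e : Fin r ≃ (G.induce Xᶜ).ConnectedComponent)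
    (hmono : ∀ i j : Fin r, i ≤ j → Nat.card (e i).supp ≤ Nat.card (e j).supp) :
    olaPlus (G.induce X) + ∑ i : Fin r, (if (i : ℕ) < r - 2 then Nat.card (e i).supp else 0)
      ≤ olaPlus G := by
  classical
  letI : Fintype V := Fintype.ofFinite V
  have hne : {c : ℕ | ∃ α : V ≃ Fin (Nat.card V), netCost G (arr α) = c}.Nonempty :=
    ⟨_, Finite.equivFin V, rfl⟩
  refine le_csInf hne ?_
  rintro c ⟨α, rfl⟩
  obtain ⟨β, hβ⟩ := exists_orderEquiv X α
  have h1 : olaPlus (G.induce X) ≤ netCost (G.induce X) (arr β) := Nat.sInf_le ⟨β, rfl⟩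
  set EF : Finset (Sym2 V) := G.edgeSet.toFinite.toFinset with hEF
  -- per-edge length as cover cardinality
  have hlen : ∀ e' ∈ EF, edgeLen (arr α) e' - 1 = (coverE α e').card := by
    intro e' he'
    induction e' using Sym2.ind with
    | _ u v =>
      rw [hEF, Set.Finite.mem_toFinset, SimpleGraph.mem_edgeSet] at he'
      rw [edgeLen_arr α u v]
      exact (coverE_card α he'.ne).symm
  have hsplit : netCost G (arr α) = ∑ e' ∈ EF, ((coverE α e').filter (· ∈ X)).card
      + ∑ e' ∈ EF, ((coverE α e').filter (· ∉ X)).card := by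
    rw [netCost_eq_sum, ← hEF, Finset.sum_congr rfl hlen, ← Finset.sum_add_distrib]
    apply Finset.sum_congr rfl
    intro e' _
    exact (Finset.card_filter_add_card_filter_not (p := (· ∈ X))).symm
  set Wf : Finset V := EF.biUnion (fun e' => (coverE α e').filter (· ∉ X)) with hWfdef
  have hWle : Wf.card ≤ ∑ e' ∈ EF, ((coverE α e').filter (· ∉ X)).card :=
    Finset.card_biUnion_le
  set EFX : Finset (Sym2 V) := EF.filter (fun e' => ∀ v ∈ e', v ∈ X) with hEFX
  have hBle : ∑ e' ∈ EFX, ((coverE α e').filter (· ∈ X)).card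
      ≤ ∑ e' ∈ EF, ((coverE α e').filter (· ∈ X)).card :=
    Finset.sum_le_sum_of_subset (by rw [hEFX]; exact Finset.filter_subset _ _)
  -- netCost of the induced graph equals the X-part of the cover sums
  have hlenX : ∀ e' ∈ (G.induce X).edgeSet.toFinite.toFinset,
      edgeLen (arr β) e' - 1 = (coverE β e').card := by
    intro e' he'
    induction e' using Sym2.ind with
    | _ x y =>
      rw [Set.Finite.mem_toFinset, SimpleGraph.mem_edgeSet] at he'
      rw [edgeLen_arr β x y]
      exact (coverE_card β he'.ne).symm
  have hC : netCost (G.induce X) (arr β)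
      = ∑ e' ∈ EFX, ((coverE α e').filter (· ∈ X)).card := by
    rw [netCost_eq_sum, Finset.sum_congr rfl hlenX]
    refine Finset.sum_bij (fun e' _ => Sym2.map Subtype.val e') ?_ ?_ ?_ ?_
    · intro e' he'
      induction e' using Sym2.ind with
      | _ x y =>
        rw [Set.Finite.mem_toFinset, SimpleGraph.mem_edgeSet] at he'
        have hadj : G.Adj x.1 y.1 := by
          simpa [SimpleGraph.comap] using he'
        show Sym2.map Subtype.val s(x, y) ∈ EFX
        rw [Sym2.map_pair_eq, hEFX, Finset.mem_filter]
        refine ⟨by rw [hEF, Set.Finite.mem_toFinset]; exact hadj, ?_⟩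
        intro v hv
        rcases Sym2.mem_iff.mp hv with rfl | rfl
        · exact x.2
        · exact y.2
    · intro a₁ _ a₂ _ hab
      exact Sym2.map.injective Subtype.val_injective hab
    · intro b hb
      rw [hEFX, Finset.mem_filter] at hb
      obtain ⟨hb1, hb2⟩ := hb
      rw [hEF, Set.Finite.mem_toFinset] at hb1
      induction b using Sym2.ind with
      | _ u v =>
        have hu : u ∈ X := hb2 u (Sym2.mem_mk_left u v)
        have hv : v ∈ X := hb2 v (Sym2.mem_mk_right u v)
        refine ⟨s(⟨u, hu⟩, ⟨v, hv⟩), ?_, ?_⟩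
        · rw [Set.Finite.mem_toFinset, SimpleGraph.mem_edgeSet]
          simpa [SimpleGraph.comap] using hb1
        · show Sym2.map Subtype.val s(⟨u, hu⟩, ⟨v, hv⟩) = s(u, v)
          rw [Sym2.map_pair_eq]
    · intro e' _
      induction e' using Sym2.ind with
      | _ x y =>
        show (coverE β s(x, y)).card
          = ((coverE α (Sym2.map Subtype.val s(x, y))).filter (· ∈ X)).card
        rw [Sym2.map_pair_eq]
        exact card_filter_cover α X β hβ x y
  -- covered-vertex facts
  have hnotW : ∀ {w u v : V}, w ∉ X → G.Adj u v → (α u : ℕ) < α w → (α w : ℕ) < α v →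
      w ∈ Wf := by
    intro w u v hwX hadj hlt1 hlt2
    rw [hWfdef]
    refine Finset.mem_biUnion.mpr ⟨s(u, v), ?_, ?_⟩
    · rw [hEF, Set.Finite.mem_toFinset]; exact hadj
    · rw [Finset.mem_filter]
      exact ⟨(mem_coverE α).mpr (Or.inl ⟨hlt1, hlt2⟩), hwX⟩
  have hcov : ∀ w : V, w ∉ X → w ∉ Wf → ∀ u v : V, G.Adj u v →
      ¬((α u : ℕ) < α w ∧ (α w : ℕ) < α v) := by
    intro w hwX hwW u v hadj hc
    exact hwW (hnotW hwX hadj hc.1 hc.2)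
  have hXnonempty : Nonempty X := hX.nonempty
  obtain ⟨x₀⟩ := hXnonempty
  -- each uncovered vertex has X entirely on one side
  have hside : ∀ w : V, w ∉ X → w ∉ Wf →
      (∀ x ∈ X, (α x : ℕ) < (α w : ℕ)) ∨ (∀ x ∈ X, (α w : ℕ) < (α x : ℕ)) := by
    intro w hwX hwW
    by_contra hc
    push_neg at hc
    obtain ⟨⟨x₁, hx₁, hx₁'⟩, ⟨x₂, hx₂, hx₂'⟩⟩ := hc
    have h1 : (α w : ℕ) < α x₁ := by
      rcases lt_or_eq_of_le hx₁' with h | h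
      · exact h
      · exact absurd (α.injective (Fin.ext h)) (fun hh => hwX (hh ▸ hx₁))
    have h2 : (α x₂ : ℕ) < α w := by
      rcases lt_or_eq_of_le hx₂' with h | h
      · exact h
      · exact absurd (α.injective (Fin.ext h)) (fun hh => hwX (hh ▸ hx₂))
    obtain ⟨p⟩ := hX.preconnected ⟨x₂, hx₂⟩ ⟨x₁, hx₁⟩
    obtain ⟨d, _, hd1, hd2⟩ := p.exists_boundary_dart {y : X | (α y.1 : ℕ) < α w}
      h2 (by simp only [Set.mem_setOf_eq]; omega)
    have hadj : G.Adj d.toProd.1.1 d.toProd.2.1 := by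
      have := d.adj
      simpa [SimpleGraph.comap] using this
    have hv2 : (α w : ℕ) < α d.toProd.2.1 := by
      simp only [Set.mem_setOf_eq, not_lt] at hd2
      rcases lt_or_eq_of_le hd2 with h | h
      · exact h
      · exact absurd (α.injective (Fin.ext h)) (fun hh => hwX (hh ▸ d.toProd.2.2))
    exact hcov w hwX hwW _ _ hadj ⟨hd1, hv2⟩
  -- same-component lemmas for each side
  have hsameR : ∀ (w w' : V) (hw : w ∉ X) (hw' : w' ∉ X), w ∉ Wf → w' ∉ Wf →
      (∀ x ∈ X, (α w : ℕ) < (α x : ℕ)) → (∀ x ∈ X, (α w' : ℕ) < (α x : ℕ)) →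
      (G.induce Xᶜ).connectedComponentMk ⟨w, hw⟩
        = (G.induce Xᶜ).connectedComponentMk ⟨w', hw'⟩ := by
    have main : ∀ (w w' : V) (hw : w ∉ X) (hw' : w' ∉ X), w' ∉ Wf →
        (∀ x ∈ X, (α w' : ℕ) < (α x : ℕ)) → (α w : ℕ) < (α w' : ℕ) →
        (G.induce Xᶜ).connectedComponentMk ⟨w, hw⟩
          = (G.induce Xᶜ).connectedComponentMk ⟨w', hw'⟩ := by
      intro w w' hw hw' hw'W hright hlt
      exact same_comp_aux hconn X (fun v => (α v : ℕ))
        (fun y z h => α.injective (Fin.ext h)) x₀.1 x₀.2 hw hw'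
        (hcov w' hw' hw'W) hright hlt
    intro w w' hw hw' hwW hw'W hr hr'
    rcases lt_trichotomy ((α w : ℕ)) ((α w' : ℕ)) with h | h | h
    · exact main w w' hw hw' hw'W hr' h
    · have : w = w' := α.injective (Fin.ext h)
      subst this; rfl
    · exact (main w' w hw' hw hwW hr h).symm
  have hsameL : ∀ (w w' : V) (hw : w ∉ X) (hw' : w' ∉ X), w ∉ Wf → w' ∉ Wf →
      (∀ x ∈ X, (α x : ℕ) < (α w : ℕ)) → (∀ x ∈ X, (α x : ℕ) < (α w' : ℕ)) →
      (G.induce Xᶜ).connectedComponentMk ⟨w, hw⟩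
        = (G.induce Xᶜ).connectedComponentMk ⟨w', hw'⟩ := by
    have main : ∀ (w w' : V) (hw : w ∉ X) (hw' : w' ∉ X), w' ∉ Wf →
        (∀ x ∈ X, (α x : ℕ) < (α w' : ℕ)) → (α w' : ℕ) < (α w : ℕ) →
        (G.induce Xᶜ).connectedComponentMk ⟨w, hw⟩
          = (G.induce Xᶜ).connectedComponentMk ⟨w', hw'⟩ := by
      intro w w' hw hw' hw'W hleft hlt
      refine same_comp_aux hconn X (fun v => Nat.card V - (α v : ℕ))
        ?_ x₀.1 x₀.2 hw hw' ?_ ?_ ?_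
      · intro y z h
        have hy := (α y).isLt
        have hz := (α z).isLt
        have h' : Nat.card V - (α y : ℕ) = Nat.card V - (α z : ℕ) := h
        exact α.injective (Fin.ext (by omega))
      · intro u v hadj hc
        obtain ⟨hc1, hc2⟩ := hc
        have hc1' : Nat.card V - (α u : ℕ) < Nat.card V - (α w' : ℕ) := hc1
        have hc2' : Nat.card V - (α w' : ℕ) < Nat.card V - (α v : ℕ) := hc2
        have hu := (α u).isLt
        have hv := (α v).isLt
        have hw'lt := (α w').isLt
        refine hcov w' hw' hw'W v u hadj.symm ⟨by omega, by omega⟩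
      · intro x hx
        have h1 := hleft x hx
        have h2 := (α x).isLt
        have h3 := (α w').isLt
        show Nat.card V - (α w' : ℕ) < Nat.card V - (α x : ℕ)
        omega
      · have h2 := (α w).isLt
        have h3 := (α w').isLt
        show Nat.card V - (α w : ℕ) < Nat.card V - (α w' : ℕ)
        omega
    intro w w' hw hw' hwW hw'W hr hr'
    rcases lt_trichotomy ((α w : ℕ)) ((α w' : ℕ)) with h | h | h
    · exact (main w' w hw' hw hwW hr h).symm
    · have : w = w' := α.injective (Fin.ext h)
      subst this; rfl
    · exact main w w' hw hw' hw'W hr' h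
  -- find at most two exceptional components
  have hA : ∃ A : Finset (Fin r), A.card ≤ 2 ∧
      ∀ (w : V) (hw : w ∉ X), w ∉ Wf →
        e.symm ((G.induce Xᶜ).connectedComponentMk ⟨w, hw⟩) ∈ A := by
    by_cases hL : ∃ w : V, ∃ hw : w ∉ X, w ∉ Wf ∧ ∀ x ∈ X, (α x : ℕ) < (α w : ℕ)
    · obtain ⟨wL, hwL, hwLW, hwLs⟩ := hL
      by_cases hR : ∃ w : V, ∃ hw : w ∉ X, w ∉ Wf ∧ ∀ x ∈ X, (α w : ℕ) < (α x : ℕ)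
      · obtain ⟨wR, hwR, hwRW, hwRs⟩ := hR
        refine ⟨{e.symm ((G.induce Xᶜ).connectedComponentMk ⟨wL, hwL⟩),
                 e.symm ((G.induce Xᶜ).connectedComponentMk ⟨wR, hwR⟩)}, ?_, ?_⟩
        · exact le_trans (Finset.card_insert_le _ _) (by simp)
        · intro w hw hwW
          rcases hside w hw hwW with hl | hr
          · rw [hsameL w wL hw hwL hwW hwLW hl hwLs]
            simp
          · rw [hsameR w wR hw hwR hwW hwRW hr hwRs]
            simp
      · refine ⟨{e.symm ((G.induce Xᶜ).connectedComponentMk ⟨wL, hwL⟩)}, by simp, ?_⟩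
        intro w hw hwW
        rcases hside w hw hwW with hl | hr
        · rw [hsameL w wL hw hwL hwW hwLW hl hwLs]
          simp
        · exact absurd ⟨w, hw, hwW, hr⟩ hR
    · by_cases hR : ∃ w : V, ∃ hw : w ∉ X, w ∉ Wf ∧ ∀ x ∈ X, (α w : ℕ) < (α x : ℕ)
      · obtain ⟨wR, hwR, hwRW, hwRs⟩ := hR
        refine ⟨{e.symm ((G.induce Xᶜ).connectedComponentMk ⟨wR, hwR⟩)}, by simp, ?_⟩
        intro w hw hwW
        rcases hside w hw hwW with hl | hr
        · exact absurd ⟨w, hw, hwW, hl⟩ hL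
        · rw [hsameR w wR hw hwR hwW hwRW hr hwRs]
          simp
      · refine ⟨∅, by simp, ?_⟩
        intro w hw hwW
        rcases hside w hw hwW with hl | hr
        · exact absurd ⟨w, hw, hwW, hl⟩ hL
        · exact absurd ⟨w, hw, hwW, hr⟩ hR
  obtain ⟨A, hA2, hAmem⟩ := hA
  -- sum of small components is at most the number of covered vertices
  have hcount : (∑ i : Fin r, if (i : ℕ) < r - 2 then Nat.card (e i).supp else 0)
      ≤ Wf.card := by
    have hTcard : r ≤ Aᶜ.card + 2 := by
      have h := Finset.card_compl A
      rw [Fintype.card_fin] at h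
      have h2 := Finset.card_le_univ A
      rw [Fintype.card_fin] at h2
      omega
    refine le_trans (sum_small_le _ hmono Aᶜ hTcard) ?_
    set Fi : Fin r → Finset V := fun i => (Subtype.val '' (e i).supp).toFinite.toFinset
      with hFi
    have hFicard : ∀ i : Fin r, Nat.card (e i).supp = (Fi i).card := by
      intro i
      rw [Nat.card_coe_set_eq, ← Set.ncard_image_of_injective _ Subtype.val_injective]
      exact Set.ncard_eq_toFinset_card _ _
    have hFiWf : ∀ i ∈ Aᶜ, Fi i ⊆ Wf := by
      intro i hiA v hv
      rw [hFi] at hv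
      rw [Set.Finite.mem_toFinset] at hv
      obtain ⟨z, hz, rfl⟩ := hv
      by_contra hvW
      have hvX : z.1 ∉ X := z.2
      have hmem := hAmem z.1 hvX hvW
      have hz' : (G.induce Xᶜ).connectedComponentMk z = e i :=
        (SimpleGraph.ConnectedComponent.mem_supp_iff _ _).mp hz
      rw [show (⟨z.1, hvX⟩ : ↥Xᶜ) = z from Subtype.ext rfl, hz',
        Equiv.symm_apply_apply] at hmem
      exact (Finset.mem_compl.mp hiA) hmem
    have hdisj : ∀ i ∈ Aᶜ, ∀ j ∈ Aᶜ, i ≠ j → Disjoint (Fi i) (Fi j) := by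
      intro i _ j _ hij
      rw [Finset.disjoint_left]
      intro v hvi hvj
      rw [hFi, Set.Finite.mem_toFinset] at hvi hvj
      obtain ⟨z, hz, hzv⟩ := hvi
      obtain ⟨z', hz', hz'v⟩ := hvj
      have hzz : z = z' := Subtype.ext (hzv.trans hz'v.symm)
      subst hzz
      have h1 := (SimpleGraph.ConnectedComponent.mem_supp_iff _ _).mp hz
      have h2 := (SimpleGraph.ConnectedComponent.mem_supp_iff _ _).mp hz'
      exact hij (e.injective (h1.symm.trans h2))
    calc ∑ i ∈ Aᶜ, Nat.card (e i).supp = ∑ i ∈ Aᶜ, (Fi i).card :=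
          Finset.sum_congr rfl (fun i _ => hFicard i)
      _ = (Aᶜ.biUnion Fi).card := (Finset.card_biUnion hdisj).symm
      _ ≤ Wf.card := by
          apply Finset.card_le_card
          intro v hv
          obtain ⟨i, hi, hvi⟩ := Finset.mem_biUnion.mp hv
          exact hFiWf i hi hvi
  -- put everything together
  have := hsplit
  omega
end

section
/- Let k be a positive integer and let G be a connected graph with n vertices and ola⁺(G) ≤ k. Then either G has a k-separating bridge or n ≤ 4k+1. -/
open scoped BigOperators

/-- An edge `s(u,v)` is a `k`-separating bridge of `G` if it is a bridge and both
connected components of `G − e` have more than `k` vertices. -/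
def IsKSepBridge {V : Type*} (G : SimpleGraph V) (k : ℕ) (u v : V) : Prop :=
  G.IsBridge s(u, v) ∧
    k < Nat.card ((G.deleteEdges {s(u, v)}).connectedComponentMk u).supp ∧
    k < Nat.card ((G.deleteEdges {s(u, v)}).connectedComponentMk v).supp

open SimpleGraph

/-- Whether an edge crosses the cut between positions `< i` and `≥ i`. -/
def crossB {V : Type*} (f : V → ℕ) (i : ℕ) : Sym2 V → Bool :=
  Sym2.lift ⟨fun a b => decide ((f a < i ∧ i ≤ f b) ∨ (f b < i ∧ i ≤ f a)),
    fun a b => decide_eq_decide.mpr or_comm⟩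

lemma crossB_mk {V : Type*} (f : V → ℕ) (i : ℕ) (a b : V) :
    crossB f i s(a, b) = true ↔ ((f a < i ∧ i ≤ f b) ∨ (f b < i ∧ i ≤ f a)) := by
  simp [crossB]

lemma edgeLen_mk_s5 {V : Type*} (f : V → ℕ) (a b : V) :
    edgeLen f s(a, b) = ((f a : ℤ) - (f b : ℤ)).natAbs := rfl

/-- The smaller endpoint label of an edge. -/
def minOf {V : Type*} (f : V → ℕ) : Sym2 V → ℕ :=
  Sym2.lift ⟨fun a b => min (f a) (f b), fun a b => min_comm _ _⟩

lemma count_cross {V : Type*} (f : V → ℕ) (n : ℕ) (hf1 : ∀ v, 1 ≤ f v) (hfn : ∀ v, f v ≤ n)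
    (hinj : Function.Injective f) (e : Sym2 V) (he : ¬ e.IsDiag) :
    ((Finset.Ico 2 (n + 1)).filter (fun i => crossB f i e)).card = edgeLen f e := by
  induction e using Sym2.ind with
  | _ a b =>
    rw [Sym2.mk_isDiag_iff] at he
    have hne : f a ≠ f b := fun h => he (hinj h)
    have h1a := hf1 a; have h1b := hf1 b; have hna := hfn a; have hnb := hfn b
    have : (Finset.Ico 2 (n + 1)).filter (fun i => crossB f i s(a, b))
        = Finset.Ioc (min (f a) (f b)) (max (f a) (f b)) := by
      ext i
      simp only [Finset.mem_filter, Finset.mem_Ico, Finset.mem_Ioc, crossB_mk]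
      omega
    rw [this, Nat.card_Ioc, edgeLen_mk_s5]
    omega

lemma endgame {V : Type*} [Finite V] (G : SimpleGraph V) (hconn : G.Connected)
    (k i : ℕ) (f : V → ℕ)
    (u v : V) (huv : G.Adj u v) (hu : f u < i) (hv : i ≤ f v)
    (huniq : ∀ w x : V, G.Adj w x → f w < i → i ≤ f x → s(w, x) = s(u, v))
    (hS : k < Nat.card {w : V | f w < i}) (hT : k < Nat.card {w : V | i ≤ f w}) :
    IsKSepBridge G k u v := by
  classical
  have hGadj : ∀ a b : V, (G.deleteEdges {s(u, v)}).Adj a b ↔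
      G.Adj a b ∧ ¬ s(a, b) = s(u, v) := by
    intro a b; rw [deleteEdges_adj]; simp
  have nocross : ∀ w x : V, f w < i → i ≤ f x →
      ¬ (G.deleteEdges {s(u, v)}).Reachable w x := by
    intro w x hw hx hr
    obtain ⟨p⟩ := hr
    obtain ⟨d, _, hd1, hd2⟩ := p.exists_boundary_dart {y : V | f y < i} hw (by simpa using hx)
    have hadj := (hGadj _ _).mp d.adj
    exact hadj.2 (huniq d.fst d.snd hadj.1 hd1 (by simpa using hd2))
  have hbridge : G.IsBridge s(u, v) := isBridge_iff.mpr (nocross u v hu hv)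
  have key : ∀ (x y : V) (p : G.Walk x y),
      ((G.deleteEdges {s(u, v)}).Reachable y u ∨ (G.deleteEdges {s(u, v)}).Reachable y v) →
      ((G.deleteEdges {s(u, v)}).Reachable x u ∨ (G.deleteEdges {s(u, v)}).Reachable x v) := by
    intro x y p
    induction p with
    | nil => exact id
    | cons h p ih =>
      intro hy
      rename_i a b c
      by_cases he : s(a, b) = s(u, v)
      · rw [Sym2.eq_iff] at he
        rcases he with ⟨rfl, rfl⟩ | ⟨rfl, rfl⟩
        · exact Or.inl (Reachable.refl _)
        · exact Or.inr (Reachable.refl _)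
      · have hadj : (G.deleteEdges {s(u, v)}).Adj a b := (hGadj a b).mpr ⟨h, he⟩
        rcases ih hy with h1 | h1
        · exact Or.inl (hadj.reachable.trans h1)
        · exact Or.inr (hadj.reachable.trans h1)
  have reach_or : ∀ x : V, (G.deleteEdges {s(u, v)}).Reachable x u ∨
      (G.deleteEdges {s(u, v)}).Reachable x v := by
    intro x
    obtain ⟨p⟩ := hconn.preconnected x u
    exact key x u p (Or.inl (Reachable.refl _))
  have hSsub : {w : V | f w < i} ⊆ ((G.deleteEdges {s(u, v)}).connectedComponentMk u).supp := by
    intro x hx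
    rcases reach_or x with h1 | h1
    · exact (SimpleGraph.ConnectedComponent.eq).mpr h1
    · exact absurd h1 (fun h => nocross x v hx hv h)
  have hTsub : {w : V | i ≤ f w} ⊆ ((G.deleteEdges {s(u, v)}).connectedComponentMk v).supp := by
    intro x hx
    rcases reach_or x with h1 | h1
    · exact absurd h1 (fun h => nocross u x hu hx h.symm)
    · exact (SimpleGraph.ConnectedComponent.eq).mpr h1
  refine ⟨hbridge, ?_, ?_⟩
  · exact lt_of_lt_of_le hS (by
      rw [Nat.card_coe_set_eq, Nat.card_coe_set_eq]
      exact Set.ncard_le_ncard hSsub (Set.toFinite _))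
  · exact lt_of_lt_of_le hT (by
      rw [Nat.card_coe_set_eq, Nat.card_coe_set_eq]
      exact Set.ncard_le_ncard hTsub (Set.toFinite _))


theorem ksep_bridge_or_small {V : Type*} [Finite V] (G : SimpleGraph V)
    (hconn : G.Connected) (k : ℕ) (hk : 1 ≤ k) (hola : olaPlus G ≤ k) :
    (∃ u v : V, IsKSepBridge G k u v) ∨ Nat.card V ≤ 4 * k + 1 := by
  classical
  by_cases hn : Nat.card V ≤ 4 * k + 1
  · exact Or.inr hn
  left
  push_neg at hn
  have hV : Fintype V := Fintype.ofFinite V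
  set n := Nat.card V with hndef
  -- obtain an optimal arrangement
  have hne : {c : ℕ | ∃ α : V ≃ Fin (Nat.card V), netCost G (arr α) = c}.Nonempty :=
    ⟨_, Finite.equivFin V, rfl⟩
  obtain ⟨α, hα⟩ := Nat.sInf_mem hne
  have hcost0 : netCost G (arr α) ≤ k := le_trans (le_of_eq hα) hola
  set f := arr α with hfdef
  -- basic properties of f
  have hf_inj : Function.Injective f := by
    intro x y h
    have : α x = α y := by
      apply Fin.ext
      simpa [hfdef, arr] using h
    exact α.injective this
  have hf1 : ∀ v, 1 ≤ f v := fun v => by simp [hfdef, arr]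
  have hfn : ∀ v, f v ≤ n := fun v => by
    have := (α v).isLt
    simp only [hfdef, arr]
    omega
  have hfval : ∀ (j : ℕ) (h : j < n), f (α.symm ⟨j, h⟩) = j + 1 := by
    intro j h
    simp [hfdef, arr]
  -- rewrite netCost as a finset sum
  have hcost : ∑ e ∈ G.edgeFinset, (edgeLen f e - 1) ≤ k := by
    rwa [netCost, ← coe_edgeFinset, finsum_mem_coe_finset] at hcost0
  set E := G.edgeFinset with hEdef
  set c : ℕ → ℕ := fun i => (E.filter (fun e => crossB f i e)).card with hcdef
  have hediag : ∀ e ∈ E, ¬ e.IsDiag := fun e he =>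
    G.not_isDiag_of_mem_edgeSet (mem_edgeFinset.mp he)
  -- double counting
  have hswap : ∑ i ∈ Finset.Ico 2 (n + 1), c i = ∑ e ∈ E, edgeLen f e := by
    simp only [hcdef, Finset.card_filter]
    rw [Finset.sum_comm]
    exact Finset.sum_congr rfl fun e he => by
      rw [← Finset.card_filter]
      exact count_cross f n hf1 hfn hf_inj e (hediag e he)
  -- each cut is crossed at least once
  have hn2 : 2 ≤ n := by omega
  have hlow : ∀ i ∈ Finset.Ico 2 (n + 1), 1 ≤ c i := by
    intro i hi
    rw [Finset.mem_Ico] at hi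
    have h0 : (0 : ℕ) < n := by omega
    have hn1 : n - 1 < n := by omega
    set v1 := α.symm ⟨0, h0⟩
    set vn := α.symm ⟨n - 1, hn1⟩
    have hv1 : f v1 < i := by rw [hfval]; omega
    have hvn : i ≤ f vn := by rw [hfval]; omega
    obtain ⟨p⟩ := hconn.preconnected v1 vn
    obtain ⟨d, _, hd1, hd2⟩ := p.exists_boundary_dart {y : V | f y < i} hv1 (by simpa using hvn)
    rw [Nat.succ_le_iff, Finset.card_pos]
    refine ⟨s(d.fst, d.snd), Finset.mem_filter.mpr ⟨mem_edgeFinset.mpr d.adj, ?_⟩⟩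
    rw [crossB_mk]
    exact Or.inl ⟨hd1, by simpa using hd2⟩
  -- each edge has length at least 1
  have hlen1 : ∀ e ∈ E, 1 ≤ edgeLen f e := by
    intro e he
    induction e using Sym2.ind with
    | _ a b =>
      have hne : f a ≠ f b := fun h => by
        have := Sym2.mk_isDiag_iff.mpr (hf_inj h)
        exact hediag _ he this
      rw [edgeLen_mk_s5]
      omega
  -- at most n - 1 edges of length 1
  have hE1 : (E.filter (fun e => edgeLen f e = 1)).card ≤ n - 1 := by
    have : (E.filter (fun e => edgeLen f e = 1)).card ≤ (Finset.Ico 1 n).card := by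
      apply Finset.card_le_card_of_injOn (minOf f)
      · intro e he
        rw [Finset.mem_coe, Finset.mem_filter] at he
        obtain ⟨heE, hlen⟩ := he
        revert hlen
        induction e using Sym2.ind with
        | _ a b =>
          intro hlen
          rw [edgeLen_mk_s5] at hlen
          have := hf1 a; have := hf1 b; have := hfn a; have := hfn b
          simp only [minOf, Sym2.lift_mk, Finset.mem_coe, Finset.mem_Ico]
          omega
      · -- injectivity on length-1 edges
        have hcanon : ∀ e ∈ (E.filter (fun e => edgeLen f e = 1) : Finset (Sym2 V)),
            ∃ x y : V, e = s(x, y) ∧ f y = f x + 1 ∧ minOf f e = f x := by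
          intro e he
          rw [Finset.mem_filter] at he
          obtain ⟨heE, hlen⟩ := he
          revert hlen
          induction e using Sym2.ind with
          | _ a b =>
            intro hlen
            rw [edgeLen_mk_s5] at hlen
            rcases lt_or_ge (f a) (f b) with h | h
            · exact ⟨a, b, rfl, by omega, by simp only [minOf, Sym2.lift_mk]; omega⟩
            · refine ⟨b, a, Sym2.eq_swap.symm, by omega, by simp only [minOf, Sym2.lift_mk]; omega⟩
        intro e he e' he' hmin
        obtain ⟨x, y, rfl, hxy, hmx⟩ := hcanon e he
        obtain ⟨x', y', rfl, hxy', hmx'⟩ := hcanon e' he'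
        simp only [Finset.coe_filter, Set.mem_setOf_eq] at *
        have hx : x = x' := hf_inj (by omega)
        have hy : y = y' := hf_inj (by omega)
        rw [hx, hy]
    rwa [Nat.card_Ico] at this
  -- edge count bound
  have hEcard : E.card ≤ (n - 1) + k := by
    have hsplit := Finset.card_filter_add_card_filter_not
      (s := E) (p := fun e => edgeLen f e = 1)
    have h2 : (E.filter (fun e => ¬ edgeLen f e = 1)).card ≤ k := by
      calc (E.filter (fun e => ¬ edgeLen f e = 1)).card
          = ∑ _e ∈ E.filter (fun e => ¬ edgeLen f e = 1), 1 := by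
            rw [Finset.card_eq_sum_ones]
        _ ≤ ∑ e ∈ E.filter (fun e => ¬ edgeLen f e = 1), (edgeLen f e - 1) := by
            apply Finset.sum_le_sum
            intro e he
            rw [Finset.mem_filter] at he
            have := hlen1 e he.1
            omega
        _ ≤ ∑ e ∈ E, (edgeLen f e - 1) :=
            Finset.sum_le_sum_of_subset (Finset.filter_subset _ _)
        _ ≤ k := hcost
    omega
  -- total length bound
  have hT : ∑ e ∈ E, edgeLen f e ≤ (n - 1) + 2 * k := by
    have : ∑ e ∈ E, edgeLen f e = (∑ e ∈ E, (edgeLen f e - 1)) + E.card := by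
      rw [Finset.card_eq_sum_ones, ← Finset.sum_add_distrib]
      exact Finset.sum_congr rfl fun e he => by have := hlen1 e he; omega
    omega
  -- sum over cuts of (c i - 1) is at most 2k
  have hCcard : (Finset.Ico 2 (n + 1)).card = n - 1 := by rw [Nat.card_Ico]; omega
  have hsum1 : ∑ i ∈ Finset.Ico 2 (n + 1), (c i - 1) ≤ 2 * k := by
    have h1 : ∑ i ∈ Finset.Ico 2 (n + 1), c i
        = (∑ i ∈ Finset.Ico 2 (n + 1), (c i - 1)) + (n - 1) := by
      rw [← hCcard, Finset.card_eq_sum_ones, ← Finset.sum_add_distrib]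
      exact Finset.sum_congr rfl fun i hi => by have := hlow i hi; omega
    have h2 : ∑ i ∈ Finset.Ico 2 (n + 1), c i ≤ (n - 1) + 2 * k := hswap ▸ hT
    omega
  -- find a middle cut crossed exactly once
  have hMsub : Finset.Ico (k + 2) (n - k + 1) ⊆ Finset.Ico 2 (n + 1) :=
    Finset.Ico_subset_Ico (by omega) (by omega)
  obtain ⟨i, hiM, hci⟩ : ∃ i ∈ Finset.Ico (k + 2) (n - k + 1), c i = 1 := by
    by_contra hcon
    push_neg at hcon
    have hge : ∀ i ∈ Finset.Ico (k + 2) (n - k + 1), 1 ≤ c i - 1 := by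
      intro i hi
      have := hlow i (hMsub hi)
      have := hcon i hi
      omega
    have : (Finset.Ico (k + 2) (n - k + 1)).card
        ≤ ∑ i ∈ Finset.Ico (k + 2) (n - k + 1), (c i - 1) := by
      rw [Finset.card_eq_sum_ones]
      exact Finset.sum_le_sum hge
    have h2 : ∑ i ∈ Finset.Ico (k + 2) (n - k + 1), (c i - 1)
        ≤ ∑ i ∈ Finset.Ico 2 (n + 1), (c i - 1) :=
      Finset.sum_le_sum_of_subset hMsub
    rw [Nat.card_Ico] at this
    omega
  rw [Finset.mem_Ico] at hiM
  -- the unique crossing edge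
  obtain ⟨e, hfe⟩ := Finset.card_eq_one.mp hci
  have heprop : e ∈ E ∧ crossB f i e = true := by
    have : e ∈ E.filter (fun e => crossB f i e) := hfe ▸ Finset.mem_singleton_self e
    simpa using Finset.mem_filter.mp this
  have huniq0 : ∀ e' ∈ E, crossB f i e' = true → e' = e := by
    intro e' he' hc
    have : e' ∈ E.filter (fun e => crossB f i e) := Finset.mem_filter.mpr ⟨he', hc⟩
    rw [hfe] at this
    exact Finset.mem_singleton.mp this
  obtain ⟨a, b, rfl⟩ : ∃ a b : V, e = s(a, b) := by
    induction e using Sym2.ind with | _ a b => exact ⟨a, b, rfl⟩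
  have hadj : G.Adj a b := (G.mem_edgeSet).mp (mem_edgeFinset.mp heprop.1)
  -- cardinality of the two sides
  have hSide1 : k < Nat.card {w : V | f w < i} := by
    have hinjg : Function.Injective (fun j : Fin (k + 1) =>
        (⟨α.symm ⟨(j : ℕ), by omega⟩, by
          simp only [Set.mem_setOf_eq, hfval]; omega⟩ : {w : V | f w < i})) := by
      intro j j' h
      have : α.symm ⟨(j : ℕ), by omega⟩ = α.symm ⟨(j' : ℕ), by omega⟩ := congrArg Subtype.val h
      have h2 := α.symm.injective this
      rw [Fin.mk.injEq] at h2
      exact Fin.ext h2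
    have := Nat.card_le_card_of_injective _ hinjg
    simpa only [Nat.card_eq_fintype_card, Fintype.card_fin, Nat.lt_iff_add_one_le] using this
  have hSide2 : k < Nat.card {w : V | i ≤ f w} := by
    have hinjg : Function.Injective (fun j : Fin (k + 1) =>
        (⟨α.symm ⟨n - 1 - (j : ℕ), by omega⟩, by
          simp only [Set.mem_setOf_eq, hfval]
          have := j.isLt; omega⟩ : {w : V | i ≤ f w})) := by
      intro j j' h
      have : α.symm ⟨n - 1 - (j : ℕ), by omega⟩ = α.symm ⟨n - 1 - (j' : ℕ), by omega⟩ :=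
        congrArg Subtype.val h
      have h2 := α.symm.injective this
      rw [Fin.mk.injEq] at h2
      have := j.isLt; have := j'.isLt
      exact Fin.ext (by omega)
    have := Nat.card_le_card_of_injective _ hinjg
    simpa only [Nat.card_eq_fintype_card, Fintype.card_fin, Nat.lt_iff_add_one_le] using this
  -- conclude via the endgame lemma
  rcases (crossB_mk f i a b).mp heprop.2 with ⟨ha, hb⟩ | ⟨hb, ha⟩
  · refine ⟨a, b, endgame G hconn k i f a b hadj ha hb ?_ hSide1 hSide2⟩
    intro w x hwx hw hx
    exact huniq0 s(w, x) (mem_edgeFinset.mpr ((G.mem_edgeSet).mpr hwx))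
      ((crossB_mk f i w x).mpr (Or.inl ⟨hw, hx⟩))
  · refine ⟨b, a, endgame G hconn k i f b a hadj.symm hb ha ?_ hSide1 hSide2⟩
    intro w x hwx hw hx
    exact (huniq0 s(w, x) (mem_edgeFinset.mpr ((G.mem_edgeSet).mpr hwx))
      ((crossB_mk f i w x).mpr (Or.inl ⟨hw, hx⟩))).trans Sym2.eq_swap
end

section
/- Let G be a 2-vertex-connected graph on n vertices and α any linear arrangement of G. Then nc(α,G) ≥ n−2. -/
open scoped BigOperators

lemma exists_cross {V : Type*} (G : SimpleGraph V) (f : V → ℕ) (t : ℕ) :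
    ∀ {x y : V} (w : G.Walk x y), f x < t → t < f y →
      (∀ z ∈ w.support, f z ≠ t) →
      ∃ u u', G.Adj u u' ∧ f u < t ∧ t < f u' := by
  intro x y w
  induction w with
  | nil => intro hx hy _; omega
  | @cons a b c h p ih =>
    intro hx hy hall
    by_cases hb : t < f b
    · exact ⟨a, b, h, hx, hb⟩
    · have hb2 : f b ≠ t := hall b (by simp)
      exact ih (by omega) hy (fun z hz => hall z (by simp [hz]))

theorem netCost_ge_of_two_vertex_connected {V : Type*} [Finite V] (G : SimpleGraph V)
    (hn : 3 ≤ Nat.card V) (h2conn : ∀ v : V, (G.induce {v}ᶜ).Connected)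
    (α : V ≃ Fin (Nat.card V)) :
    Nat.card V - 2 ≤ netCost G (arr α) := by
  classical
  cases nonempty_fintype V
  set a := arr α with ha_def
  have hainj : Function.Injective a := by
    intro u v h
    have : (α u : ℕ) = α v := by simpa [ha_def, arr] using h
    exact α.injective (Fin.ext this)
  have halt : ∀ v, a v = (α v : ℕ) + 1 := fun v => rfl
  have hbound : ∀ v, 1 ≤ a v ∧ a v ≤ Nat.card V := by
    intro v
    have := (α v).isLt
    rw [halt]; omega
  set v0 := α.symm ⟨0, by omega⟩ with hv0
  set v1 := α.symm ⟨Nat.card V - 1, by omega⟩ with hv1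
  have hav0 : a v0 = 1 := by simp [halt, hv0]
  have hav1 : a v1 = Nat.card V := by
    have : (α v1 : ℕ) = Nat.card V - 1 := by simp [hv1]
    rw [halt, this]; omega
  have hv01 : v0 ≠ v1 := by
    intro h
    have := congrArg a h
    rw [hav0, hav1] at this; omega
  set I : Finset V := Finset.univ.filter (fun v => v ≠ v0 ∧ v ≠ v1) with hI_def
  have hIcard : I.card = Nat.card V - 2 := by
    have h1 : I = Finset.univ \ {v0, v1} := by
      ext v; simp [hI_def]
    have h2 : ({v0, v1} : Finset V).card = 2 := by
      rw [Finset.card_insert_of_notMem (by simpa using hv01), Finset.card_singleton]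
    rw [h1, Finset.card_sdiff_of_subset (by simp), h2, Finset.card_univ, Nat.card_eq_fintype_card]
  -- every internal vertex is covered by an edge
  have hcov : ∀ v ∈ I, ∃ u w : V, G.Adj u w ∧ a u < a v ∧ a v < a w := by
    intro v hv
    rw [hI_def, Finset.mem_filter] at hv
    obtain ⟨-, hne0, hne1⟩ := hv
    have hm0 : v0 ∈ ({v}ᶜ : Set V) := by simp [Ne.symm hne0]
    have hm1 : v1 ∈ ({v}ᶜ : Set V) := by simp [Ne.symm hne1]
    obtain ⟨w⟩ := (h2conn v).preconnected ⟨v0, hm0⟩ ⟨v1, hm1⟩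
    have hav_lt : 1 < a v := by
      have h1 := (hbound v).1
      rcases Nat.lt_or_ge 1 (a v) with h | h
      · exact h
      · exfalso; exact hne0 (hainj (by omega : a v = a v0))
    have hav_lt' : a v < Nat.card V := by
      have h1 := (hbound v).2
      rcases Nat.lt_or_ge (a v) (Nat.card V) with h | h
      · exact h
      · exfalso; exact hne1 (hainj (by omega : a v = a v1))
    have hall : ∀ z ∈ w.support, (a ∘ Subtype.val) z ≠ a v := by
      intro z _
      simp only [Function.comp_apply]
      intro h
      exact z.2 (hainj h)
    obtain ⟨u, u', hadj, hu, hu'⟩ :=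
      exists_cross (G.induce {v}ᶜ) (a ∘ Subtype.val) (a v) w
        (by simpa [hav0] using hav_lt) (by simpa [hav1] using hav_lt') hall
    exact ⟨u.val, u'.val, hadj, hu, hu'⟩
  -- choose covering edges
  choose! pu pw hpadj hplt hpgt using hcov
  set E : Finset (Sym2 V) := G.edgeSet.toFinite.toFinset with hE_def
  have hnc : netCost G a = ∑ e ∈ E, (edgeLen a e - 1) := by
    rw [netCost, ← Set.Finite.coe_toFinset G.edgeSet.toFinite, finsum_mem_coe_finset]
  set φ : V → Sym2 V := fun v => s(pu v, pw v) with hφ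
  have hφE : ∀ v ∈ I, φ v ∈ E := by
    intro v hv
    simp only [hE_def, Set.Finite.mem_toFinset, hφ, SimpleGraph.mem_edgeSet]
    exact hpadj v hv
  have hfib := Finset.card_eq_sum_card_fiberwise hφE
  rw [hnc, ← hIcard, hfib]
  apply Finset.sum_le_sum
  intro e he
  induction e using Sym2.ind with
  | _ p q =>
    have hadjpq : G.Adj p q := by
      simpa [hE_def, Set.Finite.mem_toFinset] using he
    have hpq : a p ≠ a q := fun h => hadjpq.ne (hainj h)
    have hlen : edgeLen a s(p, q) = max (a p) (a q) - min (a p) (a q) := by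
      simp only [edgeLen, Sym2.lift_mk]
      omega
    have hsub : ∀ v ∈ Finset.filter (fun v => φ v = s(p, q)) I,
        a v ∈ Finset.Ioo (min (a p) (a q)) (max (a p) (a q)) := by
      intro v hv
      rw [Finset.mem_filter] at hv
      obtain ⟨hvI, hvφ⟩ := hv
      have h1 := hplt v hvI
      have h2 := hpgt v hvI
      rw [hφ] at hvφ
      rw [Sym2.eq_iff] at hvφ
      rw [Finset.mem_Ioo]
      rcases hvφ with ⟨h3, h4⟩ | ⟨h3, h4⟩ <;> rw [← h3, ← h4] <;> omega
    calc (Finset.filter (fun v => φ v = s(p, q)) I).card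
        ≤ (Finset.Ioo (min (a p) (a q)) (max (a p) (a q))).card :=
          Finset.card_le_card_of_injOn a hsub (fun x _ y _ h => hainj h)
      _ = edgeLen a s(p, q) - 1 := by rw [Nat.card_Ioo, hlen]
end

section
/- Let G be a connected graph with an optimal linear arrangement α, and let u be an α-special vertex of G (i.e., G−u is connected and α(u) ∉ {1,n}). Then ola⁺(G) ≥ ola⁺(G−u) + 1. -/
open scoped BigOperators

theorem olaPlus_special_vertex {V : Type*} [Finite V] (G : SimpleGraph V)
    (hconn : G.Connected) (α : V ≃ Fin (Nat.card V))
    (hopt : netCost G (arr α) = olaPlus G) (u : V)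
    (hu : (G.induce ({u}ᶜ : Set V)).Connected)
    (h1 : arr α u ≠ 1) (h2 : arr α u ≠ Nat.card V) :
    olaPlus (G.induce ({u}ᶜ : Set V)) + 1 ≤ olaPlus G := by
  classical
  haveI : Fintype V := Fintype.ofFinite V
  set G' := G.induce ({u}ᶜ : Set V) with hG'
  set m := Nat.card ↥({u}ᶜ : Set V) with hmdef
  set k : ℕ := (α u : ℕ) with hk
  have hkn : k < Nat.card V := (α u).isLt
  have harru : arr α u = k + 1 := rfl
  have hk1 : 1 ≤ k := by
    rw [harru] at h1; omega
  have hkn2 : k + 1 < Nat.card V := by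
    rw [harru] at h2; omega
  have hm : m + 1 = Nat.card V := by
    have := Set.ncard_add_ncard_compl ({u} : Set V)
    rw [Set.ncard_singleton] at this
    rw [hmdef, Nat.card_coe_set_eq]
    omega
  have hmemc : ∀ v : V, v ∈ ({u}ᶜ : Set V) ↔ v ≠ u := fun v => Set.mem_compl_singleton_iff
  have hne : ∀ v : ({u}ᶜ : Set V), ((α v.1 : ℕ)) ≠ k := by
    intro v h
    exact ((hmemc v.1).mp v.2) (α.injective (Fin.ext h))
  -- the new arrangement
  let φ : ({u}ᶜ : Set V) → Fin m := fun v =>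
    ⟨if (α v.1 : ℕ) < k then (α v.1 : ℕ) else (α v.1 : ℕ) - 1, by
      have h1 := (α v.1).isLt
      have h2 := hne v
      split_ifs with h <;> omega⟩
  have hinj : Function.Injective φ := by
    intro v w h
    have h' : ((φ v : Fin m) : ℕ) = ((φ w : Fin m) : ℕ) := by rw [h]
    have hv := hne v; have hw := hne w
    have hv' := (α v.1).isLt; have hw' := (α w.1).isLt
    simp only [φ] at h'
    have : (α v.1 : ℕ) = (α w.1 : ℕ) := by split_ifs at h' <;> omega
    exact Subtype.ext (α.injective (Fin.ext this))
  have hbij : Function.Bijective φ :=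
    (Fintype.bijective_iff_injective_and_card φ).mpr ⟨hinj, by
      rw [Fintype.card_fin, hmdef, Nat.card_eq_fintype_card]⟩
  let β : ({u}ᶜ : Set V) ≃ Fin m := Equiv.ofBijective φ hbij
  -- total version of new labels
  let β' : V → ℕ := fun v => if (α v : ℕ) < k then (α v : ℕ) + 1 else (α v : ℕ)
  have harr : ∀ v : ({u}ᶜ : Set V), arr β v = β' v.1 := by
    intro v
    have h2 := hne v
    show ((φ v : Fin m) : ℕ) + 1 = _
    simp only [φ, β']
    split_ifs with h <;> omega
  -- finite edge sets
  have hG'fin : G'.edgeSet.Finite := Set.toFinite _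
  have hGfin : G.edgeSet.Finite := Set.toFinite _
  let j : Sym2 ({u}ᶜ : Set V) → Sym2 V := Sym2.map Subtype.val
  let H : Sym2 V → ℕ := fun e => edgeLen β' e - 1
  have hHj : ∀ e : Sym2 ({u}ᶜ : Set V), edgeLen (arr β) e - 1 = H (j e) := by
    intro e
    induction e using Sym2.ind with
    | _ a b => simp only [j, Sym2.map_pair_eq, H]; rw [show edgeLen (arr β) s(a,b) =
        ((arr β a : ℤ) - arr β b).natAbs from rfl, harr a, harr b]; rfl
  let t : Finset (Sym2 V) := hG'fin.toFinset.image j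
  have hjinj : Function.Injective j := Sym2.map.injective Subtype.val_injective
  have hsum1 : netCost G' (arr β) = ∑ e ∈ t, H e := by
    rw [netCost, finsum_mem_eq_finite_toFinset_sum _ hG'fin,
      Finset.sum_image (fun x _ y _ h => hjinj h)]
    exact Finset.sum_congr rfl fun e _ => hHj e
  have htsub : t ⊆ hGfin.toFinset := by
    intro e he
    rcases Finset.mem_image.mp he with ⟨e', he', rfl⟩
    rw [Set.Finite.mem_toFinset] at he' ⊢
    induction e' using Sym2.ind with
    | _ a b =>
      have : G'.Adj a b := he'
      simp only [j, Sym2.map_pair_eq, SimpleGraph.mem_edgeSet]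
      exact (this : G.Adj a.1 b.1)
  -- pointwise bound
  have hpt : ∀ e ∈ t, H e ≤ edgeLen (arr α) e - 1 := by
    intro e he
    rcases Finset.mem_image.mp he with ⟨e', _, rfl⟩
    induction e' using Sym2.ind with
    | _ a b =>
      have ha := hne a; have hb := hne b
      simp only [j, Sym2.map_pair_eq, H]
      rw [show edgeLen β' s(a.1, b.1) = ((β' a.1 : ℤ) - β' b.1).natAbs from rfl,
        show edgeLen (arr α) s(a.1, b.1) = ((arr α a.1 : ℤ) - arr α b.1).natAbs from rfl]
      simp only [β', arr]
      split_ifs <;> omega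
  -- the crossing edge
  have hn0 : (0 : ℕ) < Nat.card V := by omega
  let a0 : V := α.symm ⟨0, hn0⟩
  let b0 : V := α.symm ⟨Nat.card V - 1, by omega⟩
  have ha0 : (α a0 : ℕ) = 0 := by simp [a0]
  have hb0 : (α b0 : ℕ) = Nat.card V - 1 := by simp [b0]
  have ha0u : a0 ∈ ({u}ᶜ : Set V) := (hmemc a0).mpr fun h => by
    rw [h] at ha0; omega
  have hb0u : b0 ∈ ({u}ᶜ : Set V) := (hmemc b0).mpr fun h => by
    rw [h] at hb0; omega
  let A : ({u}ᶜ : Set V) := ⟨a0, ha0u⟩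
  let B : ({u}ᶜ : Set V) := ⟨b0, hb0u⟩
  let S : Set ({u}ᶜ : Set V) := {v | (α v.1 : ℕ) < k}
  have hA : A ∈ S := by simp only [S, Set.mem_setOf_eq]; rw [show (α A.1 : ℕ) = 0 from ha0]; omega
  have hB : B ∉ S := by
    simp only [S, Set.mem_setOf_eq]
    rw [show (α B.1 : ℕ) = Nat.card V - 1 from hb0]; omega
  obtain ⟨p⟩ := hu.preconnected A B
  obtain ⟨d, _, hdfst, hdsnd⟩ := p.exists_boundary_dart S hA hB
  have hdadj : G'.Adj d.fst d.snd := d.adj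
  have he0' : s(d.fst, d.snd) ∈ G'.edgeSet := hdadj
  have he0t : j s(d.fst, d.snd) ∈ t :=
    Finset.mem_image.mpr ⟨s(d.fst, d.snd), hG'fin.mem_toFinset.mpr he0', rfl⟩
  have hstrict : H (j s(d.fst, d.snd)) < edgeLen (arr α) (j s(d.fst, d.snd)) - 1 := by
    have hx : (α d.fst.1 : ℕ) < k := hdfst
    have hy : ¬ (α d.snd.1 : ℕ) < k := hdsnd
    have hy' := hne d.snd
    simp only [j, Sym2.map_pair_eq, H]
    rw [show edgeLen β' s(d.fst.1, d.snd.1) = ((β' d.fst.1 : ℤ) - β' d.snd.1).natAbs from rfl,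
      show edgeLen (arr α) s(d.fst.1, d.snd.1) =
        ((arr α d.fst.1 : ℤ) - arr α d.snd.1).natAbs from rfl]
    simp only [β', arr]
    split_ifs <;> omega
  -- put it together
  have hlt : ∑ e ∈ t, H e < ∑ e ∈ t, (edgeLen (arr α) e - 1) :=
    Finset.sum_lt_sum hpt ⟨_, he0t, hstrict⟩
  have hle2 : ∑ e ∈ t, (edgeLen (arr α) e - 1) ≤ ∑ e ∈ hGfin.toFinset, (edgeLen (arr α) e - 1) :=
    Finset.sum_le_sum_of_subset htsub
  have hcostα : netCost G (arr α) = ∑ e ∈ hGfin.toFinset, (edgeLen (arr α) e - 1) :=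
    finsum_mem_eq_finite_toFinset_sum _ hGfin
  have hola' : olaPlus G' ≤ netCost G' (arr β) := Nat.sInf_le ⟨β, rfl⟩
  have : netCost G' (arr β) + 1 ≤ netCost G (arr α) := by
    rw [hsum1, hcostα]; omega
  omega
end

section
/- Let G be a 2-edge-connected graph on n ≥ 3 vertices with vertices u, w. Then there exist two paths P, P' from u to w such that E(P) ∩ E(P') = ∅, and the subgraph induced by E(P) ∪ E(P') has at most (3/2)(n−1) edges. -/
open scoped BigOperators

/-! Since no edge is a bridge, a closed trail through `u` can be pushed along a `u`–`w` walk one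
edge at a time (rotating it, or splicing in a detour around the edge), which yields a closed trail
through `u` and `w` and hence two edge-disjoint `u`–`w` walks. Take such a pair `P`, `Q` of minimum
total length: both are paths, and exchanging tails shows that their common vertices occur in the same
order along both. So no common vertex `x ≠ w` has both successors common, and the common vertices
other than `w` inject into the vertices lying on exactly one of the paths. Together with
`|E(P)| + |E(Q)| = |V(P) ∪ V(Q)| + |V(P) ∩ V(Q)| - 2` this gives the bound. -/

namespace SimpleGraph

variable {V : Type*} {G : SimpleGraph V} {u w x y z : V}

open Walk

theorem Walk.exists_walk_first_mem {a b : V} (p : G.Walk a b) (S : Set V) (hb : b ∈ S) :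
    ∃ c ∈ S, ∃ q : G.Walk a c, q.edges ⊆ p.edges ∧ ∀ v ∈ q.support, v ∈ S → v = c := by
  induction p with
  | nil => exact ⟨_, hb, nil, by simp, by simp⟩
  | @cons a a' b h p ih =>
    by_cases ha : a ∈ S
    · exact ⟨a, ha, nil, by simp, by simp⟩
    obtain ⟨c, hc, q, hqp, hqS⟩ := ih hb
    refine ⟨c, hc, cons h q, by simpa using List.cons_subset_cons _ hqp, fun v hv hvS => ?_⟩
    rw [support_cons, List.mem_cons] at hv
    rcases hv with rfl | hv
    · exact absurd hvS ha
    · exact hqS v hv hvS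

def OnClosedTrail (G : SimpleGraph V) (x y : V) : Prop :=
  ∃ c : G.Walk y y, c.IsTrail ∧ x ∈ c.support

theorem onClosedTrail_self (x : V) : G.OnClosedTrail x x := ⟨nil, .nil, by simp⟩

theorem OnClosedTrail.of_adj [DecidableEq V] (h : G.OnClosedTrail x y) (hyz : G.Adj y z)
    (hb : ¬ G.IsBridge s(y, z)) : G.OnClosedTrail x z := by
  obtain ⟨c, hc, hx⟩ := h
  by_cases hz : z ∈ c.support
  · exact ⟨c.rotate z hz, hc.rotate hz, (c.mem_support_rotate_iff z hz).mpr hx⟩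
  obtain ⟨R, hR⟩ :=
    reachable_deleteEdges_iff_exists_walk.mp (not_not.mp (isBridge_iff.not.mp hb))
  obtain ⟨a, ha, R₁, hR₁, hR₁c⟩ :=
    R.reverse.exists_walk_first_mem {v | v ∈ c.support} c.start_mem_support
  obtain ⟨W, hW, hWc, hxW⟩ :
      ∃ W : G.Walk y a, W.IsTrail ∧ W.edges ⊆ c.edges ∧ x ∈ W.support := by
    rw [← c.take_spec ha, mem_support_append_iff] at hx
    rcases hx with hx | hx
    · exact ⟨c.takeUntil a ha, hc.takeUntil ha, c.edges_takeUntil_subset_edges ha, hx⟩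
    · exact ⟨(c.dropUntil a ha).reverse, (hc.dropUntil ha).reverse,
        by simpa using c.edges_dropUntil_subset_edges ha, by simpa using hx⟩
  set T := R₁.bypass
  -- `c` and `R₁` share no vertex but `a`, hence no edge
  have hWT : W.edges.Disjoint T.reverse.edges := by
    intro e heW heT
    rw [edges_reverse, List.mem_reverse] at heT
    replace heT := R₁.edges_bypass_subset_edges heT
    replace heW := hWc heW
    induction e using Sym2.ind with | _ v v'
    have hv := hR₁c v (R₁.fst_mem_support_of_mem_edges heT) (c.fst_mem_support_of_mem_edges heW)
    have hv' := hR₁c v' (R₁.snd_mem_support_of_mem_edges heT) (c.snd_mem_support_of_mem_edges heW)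
    subst hv hv'
    exact G.loopless.irrefl _ (c.adj_of_mem_edges heW)
  have hzW : s(z, y) ∉ W.edges := fun h => hz (c.fst_mem_support_of_mem_edges (hWc h))
  have hzT : s(z, y) ∉ T.reverse.edges := by
    intro h
    rw [edges_reverse, List.mem_reverse] at h
    have := hR₁ (R₁.edges_bypass_subset_edges h)
    rw [edges_reverse, List.mem_reverse, Sym2.eq_swap] at this
    exact hR this
  refine ⟨cons hyz.symm (W.append T.reverse), ?_, by simp [hxW]⟩
  simp only [isTrail_cons, isTrail_append, edges_append, List.mem_append, not_or]
  exact ⟨⟨hW, R₁.bypass_isPath.isTrail.reverse, hWT⟩, hzW, hzT⟩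

theorem OnClosedTrail.of_walk [DecidableEq V] (h : G.OnClosedTrail x y) (q : G.Walk y z)
    (hq : ∀ e ∈ q.edges, ¬ G.IsBridge e) : G.OnClosedTrail x z := by
  induction q with
  | nil => exact h
  | cons hadj q ih =>
    simp only [edges_cons, List.mem_cons, forall_eq_or_imp] at hq
    exact ih (h.of_adj hadj hq.1) hq.2

namespace Walk

theorem exists_edges_disjoint_of_forall_not_isBridge [DecidableEq V] (q : G.Walk u w)
    (hq : ∀ e ∈ q.edges, ¬ G.IsBridge e) : ∃ p p' : G.Walk u w, p.edges.Disjoint p'.edges := by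
  obtain ⟨c, hc, hu⟩ := (onClosedTrail_self u).of_walk q hq
  exact ⟨(c.takeUntil u hu).reverse, c.dropUntil u hu,
    by simpa using hc.disjoint_edges_takeUntil_dropUntil hu⟩

def IsMinEdgeDisjointPair (P Q : G.Walk u w) : Prop :=
  P.edges.Disjoint Q.edges ∧ ∀ p q : G.Walk u w, p.edges.Disjoint q.edges →
    P.length + Q.length ≤ p.length + q.length

theorem exists_isMinEdgeDisjointPair (h : ∃ p q : G.Walk u w, p.edges.Disjoint q.edges) :
    ∃ P Q : G.Walk u w, P.IsPath ∧ Q.IsPath ∧ IsMinEdgeDisjointPair P Q := by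
  classical
  have hex : ∃ n, ∃ p q : G.Walk u w, p.edges.Disjoint q.edges ∧ p.length + q.length = n :=
    let ⟨p, q, hpq⟩ := h; ⟨_, p, q, hpq, rfl⟩
  obtain ⟨p, q, hpq, hlen⟩ := Nat.find_spec hex
  refine ⟨p.bypass, q.bypass, p.bypass_isPath, q.bypass_isPath,
    List.disjoint_of_subset_left p.edges_bypass_subset_edges
      (List.disjoint_of_subset_right q.edges_bypass_subset_edges hpq), fun p' q' h' => ?_⟩
  have := Nat.find_min' hex ⟨p', q', h', rfl⟩
  have := p.length_bypass_le_length
  have := q.length_bypass_le_length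
  omega

variable {P Q : G.Walk u w}

theorem IsMinEdgeDisjointPair.symm (h : IsMinEdgeDisjointPair P Q) : IsMinEdgeDisjointPair Q P :=
  ⟨h.1.symm, fun p q hpq => by have := h.2 q p hpq.symm; omega⟩

/-- Otherwise `P` up to its `i`-th vertex followed by `Q` from its `j`-th vertex, and `Q` up to its
`j'`-th vertex followed by `P` from its `i'`-th vertex, would be a shorter edge-disjoint pair. -/
theorem IsMinEdgeDisjointPair.lt_of_getVert_eq (h : IsMinEdgeDisjointPair P Q)
    (hP : P.IsTrail) (hQ : Q.IsTrail) {i i' j j' : ℕ} (hii' : i < i') (hi' : i' ≤ P.length)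
    (hj : j ≤ Q.length) (hx : P.getVert i = Q.getVert j) (hy : P.getVert i' = Q.getVert j') :
    j < j' := by
  by_contra! hj'j
  let W₁ := (P.take i).append ((Q.drop j).copy hx.symm rfl)
  let W₂ := (Q.take j').append ((P.drop i').copy hy rfl)
  have hW : W₁.edges.Disjoint W₂.edges := by
    simp only [W₁, W₂, edges_append, edges_copy, edges_take, edges_drop,
      List.disjoint_append_left, List.disjoint_append_right]
    refine ⟨⟨?_, ?_⟩, ?_, ?_⟩
    · exact List.disjoint_of_subset_left (List.take_subset _ _)
        (List.disjoint_of_subset_right (List.take_subset _ _) h.1)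
    · exact (List.disjoint_take_drop hQ.edges_nodup hj'j).symm
    · exact List.disjoint_take_drop hP.edges_nodup hii'.le
    · exact List.disjoint_of_subset_left (List.drop_subset _ _)
        (List.disjoint_of_subset_right (List.drop_subset _ _) h.1.symm)
  have := h.2 W₁ W₂ hW
  simp only [W₁, W₂, length_append, length_copy, take_length, drop_length] at this
  omega

theorem IsMinEdgeDisjointPair.getVert_succ_notMem (h : IsMinEdgeDisjointPair P Q)
    (hP : P.IsTrail) (hQ : Q.IsTrail) {i j : ℕ} (hi : i < P.length) (hj : j < Q.length)
    (hx : P.getVert i = Q.getVert j) :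
    P.getVert (i + 1) ∉ Q.support ∨ Q.getVert (j + 1) ∉ P.support := by
  by_contra! ⟨ha, hb⟩
  obtain ⟨ja, hja, hjaQ⟩ := mem_support_iff_exists_getVert.mp ha
  obtain ⟨ib, hib, hibP⟩ := mem_support_iff_exists_getVert.mp hb
  have h₁ : j < ja := h.lt_of_getVert_eq hP hQ (lt_add_one i) hi hj.le hx hja.symm
  have h₂ : ja ≠ j + 1 := by
    rintro rfl
    refine h.1 (P.mk_mem_edges_iff_exists.mpr ⟨i, hi, rfl⟩) ?_
    rw [hx, ← hja]
    exact Q.mk_mem_edges_iff_exists.mpr ⟨j, hj, rfl⟩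
  have h₃ : ib < i + 1 := h.symm.lt_of_getVert_eq hQ hP (by omega) hjaQ hibP hib.symm hja
  have h₄ : i < ib := h.symm.lt_of_getVert_eq hQ hP (lt_add_one j) hj hi.le hx.symm hib.symm
  omega

theorem idxOf_support_lt_length [DecidableEq V] {p : G.Walk u w} (hx : x ∈ p.support)
    (hxw : x ≠ w) : p.support.idxOf x < p.length :=
  p.length_takeUntil hx ▸ p.length_takeUntil_lt_length hx hxw

theorem IsPath.eq_of_getVert_idxOf_succ_eq [DecidableEq V] {p : G.Walk u w} (hp : p.IsPath)
    (hx : x ∈ p.support) (hy : y ∈ p.support) (hxw : x ≠ w) (hyw : y ≠ w)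
    (h : p.getVert (p.support.idxOf x + 1) = p.getVert (p.support.idxOf y + 1)) : x = y := by
  have := hp.getVert_injOn (Nat.succ_le_of_lt (idxOf_support_lt_length hx hxw))
    (Nat.succ_le_of_lt (idxOf_support_lt_length hy hyw)) h
  rw [← p.getVert_support_idxOf hx, ← p.getVert_support_idxOf hy, Nat.succ_injective this]

theorem natCard_mem_edges_or_mem_edges {a b c d : V} {p : G.Walk a b} {q : G.Walk c d}
    (hp : p.IsTrail) (hq : q.IsTrail) (h : p.edges.Disjoint q.edges) :
    Nat.card {e // e ∈ p.edges ∨ e ∈ q.edges} = p.length + q.length := by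
  classical
  have hnodup : (p.edges ++ q.edges).Nodup :=
    List.nodup_append'.mpr ⟨hp.edges_nodup, hq.edges_nodup, h⟩
  rw [← length_edges, ← length_edges, ← List.length_append, ← List.toFinset_card_of_nodup hnodup,
    ← Nat.card_eq_finsetCard]
  exact Nat.card_congr (Equiv.subtypeEquivRight (by simp))

end Walk

open Finset

section Counting

variable [DecidableEq V] {P Q : G.Walk u w} (hP : P.IsPath) (hQ : Q.IsPath)
  (hsucc : ∀ i < P.length, ∀ j < Q.length, P.getVert i = Q.getVert j →
    P.getVert (i + 1) ∉ Q.support ∨ Q.getVert (j + 1) ∉ P.support)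
include hP hQ hsucc

theorem card_inter_le_card_sdiff_add_one :
    #(P.support.toFinset ∩ Q.support.toFinset) ≤
      #((P.support.toFinset ∪ Q.support.toFinset) \ (P.support.toFinset ∩ Q.support.toFinset))
        + 1 := by
  set X := P.support.toFinset ∩ Q.support.toFinset
  set U := P.support.toFinset ∪ Q.support.toFinset
  set f : V → V := fun x => if P.getVert (P.support.idxOf x + 1) ∈ Q.support
    then Q.getVert (Q.support.idxOf x + 1) else P.getVert (P.support.idxOf x + 1)
  have hf : ∀ x ∈ X.erase w, x ∈ P.support ∧ x ∈ Q.support ∧ x ≠ w ∧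
      ((f x = P.getVert (P.support.idxOf x + 1) ∧ f x ∉ Q.support) ∨
        (f x = Q.getVert (Q.support.idxOf x + 1) ∧ f x ∉ P.support)) := by
    intro x hx
    simp only [X, mem_erase, mem_inter, List.mem_toFinset] at hx
    obtain ⟨hxw, hxP, hxQ⟩ := hx
    refine ⟨hxP, hxQ, hxw, ?_⟩
    have := hsucc _ (idxOf_support_lt_length hxP hxw) _ (idxOf_support_lt_length hxQ hxw)
      (by rw [getVert_support_idxOf _ hxP, getVert_support_idxOf _ hxQ])
    by_cases h : P.getVert (P.support.idxOf x + 1) ∈ Q.support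
    · exact Or.inr ⟨if_pos h, by simpa only [f, if_pos h] using this.resolve_left (not_not.mpr h)⟩
    · exact Or.inl ⟨if_neg h, by simpa only [f, if_neg h] using h⟩
  have hmaps : Set.MapsTo f (X.erase w) (U \ X : Finset V) := by
    intro x hx
    obtain ⟨-, -, -, ⟨hfx, hQ⟩ | ⟨hfx, hP⟩⟩ := hf x hx
    · rw [hfx] at hQ ⊢
      simp [X, U, hQ, getVert_mem_support]
    · rw [hfx] at hP ⊢
      simp [X, U, hP, getVert_mem_support]
  have hinj : Set.InjOn f (X.erase w) := by
    intro x hx y hy hxy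
    obtain ⟨hxP, hxQ, hxw, ⟨hfx, hxQ'⟩ | ⟨hfx, hxP'⟩⟩ := hf x hx <;>
    obtain ⟨hyP, hyQ, hyw, ⟨hfy, hyQ'⟩ | ⟨hfy, hyP'⟩⟩ := hf y hy
    · exact hP.eq_of_getVert_idxOf_succ_eq hxP hyP hxw hyw (hfx ▸ hfy ▸ hxy)
    · exact absurd (hxy ▸ hfx ▸ P.getVert_mem_support _) hyP'
    · exact absurd (hxy ▸ hfy ▸ P.getVert_mem_support _) hxP'
    · exact hQ.eq_of_getVert_idxOf_succ_eq hxQ hyQ hxw hyw (hfx ▸ hfy ▸ hxy)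
  have := card_le_card_of_injOn f hmaps hinj
  rw [card_erase_of_mem (by simp [X] : w ∈ X)] at this
  omega

theorem two_mul_length_add_length_le [Fintype V] :
    2 * (P.length + Q.length) ≤ 3 * (Fintype.card V - 1) := by
  have hX := card_inter_le_card_sdiff_add_one hP hQ hsucc
  rw [card_sdiff_of_subset inter_subset_union] at hX
  have hUX := card_union_add_card_inter P.support.toFinset Q.support.toFinset
  have hXU := card_le_card (inter_subset_union (s := P.support.toFinset) (t := Q.support.toFinset))
  have hU := card_le_univ (P.support.toFinset ∪ Q.support.toFinset)
  rw [List.toFinset_card_of_nodup hP.support_nodup, List.toFinset_card_of_nodup hQ.support_nodup,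
    length_support, length_support] at hUX
  omega

end Counting

end SimpleGraph

open SimpleGraph Walk in
theorem two_edge_disjoint_paths_general {V : Type*} [Finite V] (G : SimpleGraph V)
    (hconn : G.Connected)
    (hbridgeless : ∀ u v : V, ¬ G.IsBridge s(u, v)) (u w : V) :
    ∃ P P' : G.Walk u w, P.IsPath ∧ P'.IsPath ∧
      (∀ e, e ∈ P.edges → e ∉ P'.edges) ∧
      2 * Nat.card {e : Sym2 V // e ∈ P.edges ∨ e ∈ P'.edges} ≤ 3 * (Nat.card V - 1) := by
  classical
  have := Fintype.ofFinite V
  obtain ⟨q⟩ := hconn.preconnected u w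
  obtain ⟨P, Q, hP, hQ, hmin⟩ := exists_isMinEdgeDisjointPair
    (q.exists_edges_disjoint_of_forall_not_isBridge fun e _ => Sym2.ind hbridgeless e)
  refine ⟨P, Q, hP, hQ, fun e => @hmin.1 e, ?_⟩
  rw [natCard_mem_edges_or_mem_edges hP.isTrail hQ.isTrail hmin.1, Nat.card_eq_fintype_card]
  exact two_mul_length_add_length_le hP hQ fun i hi j hj =>
    hmin.getVert_succ_notMem hP.isTrail hQ.isTrail hi hj

theorem two_edge_disjoint_paths {V : Type*} [Finite V] (G : SimpleGraph V)
    (hconn : G.Connected) (hn : 3 ≤ Nat.card V)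
    (hbridgeless : ∀ u v : V, ¬ G.IsBridge s(u, v)) (u w : V) :
    ∃ P P' : G.Walk u w, P.IsPath ∧ P'.IsPath ∧
      (∀ e, e ∈ P.edges → e ∉ P'.edges) ∧
      2 * Nat.card {e : Sym2 V // e ∈ P.edges ∨ e ∈ P'.edges} ≤ 3 * (Nat.card V - 1) :=
  two_edge_disjoint_paths_general G hconn hbridgeless u w
end
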